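/- arXiv:math/0506248 — 2 statements merged into one kernel-verified Lean document; each statement's English description precedes it below -/
import Mathlib

section
/- The total height statistic: the sum over all labeled trees T on n vertices with two marked (ordered) vertices a, b of the distance l(T) between a and b equals A_n = n!·Σ_{k=0}^{n-2} n^k/k!. -/
open scoped Classical in
/-- `m_{n,k} = Σ_T l(T)^k`, the sum over all Cayley trees `T` on `n` vertices with
two marked (ordered) vertices `a, b` of the `k`-th power of the distance `l(T)`
between the marked vertices. -/
noncomputable def m (n k : ℕ) : ℕ :=
  ∑ G : SimpleGraph (Fin n), ∑ a : Fin n, ∑ b : Fin n,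
    if G.IsTree then (G.dist a b) ^ k else 0

/-- `A_n = Σ_{p+q=n, p,q≥1} (n!/(p!·q!)) p^p q^q`. -/
def A (n : ℕ) : ℕ :=
  ∑ p ∈ Finset.Ioo 0 n, n.choose p * p ^ p * (n - p) ^ (n - p)


namespace TotalHeight
open Finset SimpleGraph
open scoped Classical

/-! ### Generic walk builder along a function -/

variable {V : Type*} {G : SimpleGraph V}

def walkOfFn (g : ℕ → V) {m : ℕ} (hadj : ∀ k, k + 1 ≤ m → G.Adj (g k) (g (k+1))) :
    (k : ℕ) → k ≤ m → G.Walk (g (m - k)) (g m)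
  | 0, _ => Walk.nil.copy (by rw [Nat.sub_zero]) rfl
  | (k+1), h =>
      Walk.cons
        (by
          have h1 : m - (k+1) + 1 = m - k := by omega
          have := hadj (m - (k+1)) (by omega)
          rwa [h1] at this)
        ((walkOfFn g hadj k (by omega)).copy rfl rfl)

lemma walkOfFn_length (g : ℕ → V) {m : ℕ} (hadj : ∀ k, k + 1 ≤ m → G.Adj (g k) (g (k+1))) :
    ∀ (k : ℕ) (h : k ≤ m), (walkOfFn g hadj k h).length = k
  | 0, _ => by simp [walkOfFn]
  | (k+1), h => by
      simp [walkOfFn, walkOfFn_length g hadj k (by omega)]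

lemma walkOfFn_support (g : ℕ → V) {m : ℕ} (hadj : ∀ k, k + 1 ≤ m → G.Adj (g k) (g (k+1))) :
    ∀ (k : ℕ) (h : k ≤ m),
      (walkOfFn g hadj k h).support = (List.range (k+1)).map (fun j => g (m - k + j))
  | 0, _ => by simp [walkOfFn, List.range_succ]
  | (k+1), h => by
      rw [walkOfFn]
      rw [Walk.support_cons, Walk.support_copy,
        walkOfFn_support g hadj k (by omega)]
      conv_rhs => rw [List.range_succ_eq_map]
      simp only [List.map_cons, List.map_map, Nat.add_zero]
      refine List.cons_eq_cons.mpr ⟨rfl, ?_⟩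
      apply List.map_congr_left
      intro j hj
      simp only [Function.comp_apply]
      congr 1
      simp only [List.mem_range] at hj
      omega

lemma walkOfFn_getVert (g : ℕ → V) {m : ℕ} (hadj : ∀ k, k + 1 ≤ m → G.Adj (g k) (g (k+1))) :
    ∀ (k : ℕ) (h : k ≤ m) (j : ℕ), j ≤ k → (walkOfFn g hadj k h).getVert j = g (m - k + j)
  | 0, _, j, hj => by
      interval_cases j
      simp [walkOfFn]
  | (k+1), h, j, hj => by
      rw [walkOfFn]
      rcases Nat.eq_zero_or_pos j with rfl | hjpos
      · simp
      · rw [Walk.getVert_cons _ _ (by omega), Walk.getVert_copy,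
          walkOfFn_getVert g hadj k (by omega) (j-1) (by omega)]
        congr 1
        omega

lemma walkOfFn_isPath (g : ℕ → V) {m : ℕ} (hadj : ∀ k, k + 1 ≤ m → G.Adj (g k) (g (k+1)))
    (k : ℕ) (h : k ≤ m) (hinj : ∀ i j : ℕ, i ≤ m → j ≤ m → g i = g j → i = j) :
    (walkOfFn g hadj k h).IsPath := by
  rw [Walk.isPath_def, walkOfFn_support]
  rw [List.nodup_map_iff_inj_on List.nodup_range]
  intro i hi j hj hg
  have := hinj (m - k + i) (m - k + j) (by simp at hi; omega) (by simp at hj; omega) hg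
  omega

/-! ### Cut lemma -/

lemma not_reachable_cut {S : Set V} (h : ∀ u v, G.Adj u v → (u ∈ S ↔ v ∈ S)) {x y : V}
    (hx : x ∈ S) (hy : y ∉ S) : ¬ G.Reachable x y := by
  rintro ⟨p⟩
  induction p with
  | nil => exact hy hx
  | cons hadj p ih => exact ih ((h _ _ hadj).mp hx) hy

/-! ### In a tree, every path realizes the distance -/

lemma path_length_eq_dist (hA : G.IsAcyclic) {u v : V} (p : G.Walk u v) (hp : p.IsPath) :
    p.length = G.dist u v := by
  obtain ⟨q, hq, hlen⟩ := (p.reachable).exists_path_of_dist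
  have : (⟨p, hp⟩ : G.Path u v) = ⟨q, hq⟩ := hA.path_unique _ _
  rw [show p = q from congrArg Subtype.val this, hlen]

/-! ### Periodic points of an endofunction -/

variable {n : ℕ}

def IsPer (f : Fin n → Fin n) (x : Fin n) : Prop := ∃ k, 0 < k ∧ f^[k] x = x

noncomputable def per (f : Fin n → Fin n) : Finset (Fin n) :=
  univ.filter (IsPer f)

lemma mem_per {f : Fin n → Fin n} {x : Fin n} : x ∈ per f ↔ IsPer f x := by
  simp [per]

lemma IsPer.apply {f : Fin n → Fin n} {x : Fin n} (h : IsPer f x) : IsPer f (f x) := by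
  obtain ⟨k, hk, hfk⟩ := h
  refine ⟨k, hk, ?_⟩
  rw [← Function.iterate_succ_apply, Function.iterate_succ_apply', hfk]

lemma IsPer.iterate {f : Fin n → Fin n} {x : Fin n} (h : IsPer f x) (m : ℕ) :
    IsPer f (f^[m] x) := by
  induction m with
  | zero => exact h
  | succ m ih => rw [Function.iterate_succ_apply']; exact ih.apply

lemma exists_iterate_isPer (f : Fin n → Fin n) [NeZero n] (x : Fin n) :
    ∃ k, IsPer f (f^[k] x) := by
  obtain ⟨i, j, hij, hfij⟩ := Finite.exists_ne_map_eq_of_infinite (fun i : ℕ => f^[i] x)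
  rcases Nat.lt_or_ge i j with hlt | hge
  · refine ⟨i, j - i, by omega, ?_⟩
    rw [← Function.iterate_add_apply]
    rw [show j - i + i = j by omega]
    exact hfij.symm
  · have hlt : j < i := by omega
    refine ⟨j, i - j, by omega, ?_⟩
    rw [← Function.iterate_add_apply]
    rw [show i - j + j = i by omega]
    exact hfij

lemma injOn_per {f : Fin n → Fin n} {x y : Fin n} (hx : IsPer f x) (hy : IsPer f y)
    (hxy : f x = f y) : x = y := by
  obtain ⟨a, ha, hfa⟩ := hx
  obtain ⟨b, hb, hfb⟩ := hy
  have hxN : f^[a*b] x = x := by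
    rw [Function.iterate_mul]
    clear hxy hfb
    induction b with
    | zero => omega
    | succ b ih =>
        rcases Nat.eq_zero_or_pos b with rfl | hbpos
        · simpa using hfa
        · rw [Function.iterate_succ_apply, hfa, ih hbpos]
  have hyN : f^[a*b] y = y := by
    rw [mul_comm, Function.iterate_mul]
    clear hxy hfa hxN
    induction a with
    | zero => omega
    | succ a ih =>
        rcases Nat.eq_zero_or_pos a with rfl | hapos
        · simpa using hfb
        · rw [Function.iterate_succ_apply, hfb, ih hapos]
  have hab : 0 < a * b := Nat.mul_pos ha hb
  calc x = f^[a*b] x := hxN.symm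
    _ = f^[a*b - 1] (f x) := by rw [← Function.iterate_succ_apply]; congr 1; omega
    _ = f^[a*b - 1] (f y) := by rw [hxy]
    _ = f^[a*b] y := by rw [← Function.iterate_succ_apply]; congr 1; omega
    _ = y := hyN


/-! ### Entry time into the periodic part -/

noncomputable def steps (f : Fin n → Fin n) [NeZero n] (x : Fin n) : ℕ :=
  Nat.find (exists_iterate_isPer f x)

noncomputable def entry (f : Fin n → Fin n) [NeZero n] (x : Fin n) : Fin n :=
  f^[steps f x] x

variable [NeZero n] {f : Fin n → Fin n}

lemma entry_isPer (f : Fin n → Fin n) (x : Fin n) : IsPer f (entry f x) :=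
  Nat.find_spec (exists_iterate_isPer f x)

lemma entry_mem_per (f : Fin n → Fin n) (x : Fin n) : entry f x ∈ per f :=
  mem_per.mpr (entry_isPer f x)

lemma steps_eq_zero {x : Fin n} (hx : x ∈ per f) : steps f x = 0 := by
  rw [steps, Nat.find_eq_zero]
  simpa using mem_per.mp hx

lemma entry_of_mem_per {x : Fin n} (hx : x ∈ per f) : entry f x = x := by
  rw [entry, steps_eq_zero hx, Function.iterate_zero_apply]

lemma steps_pos {x : Fin n} (hx : x ∉ per f) : 0 < steps f x := by
  rcases Nat.eq_zero_or_pos (steps f x) with h | h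
  · exfalso
    apply hx
    rw [mem_per]
    have := entry_isPer f x
    rwa [entry, h, Function.iterate_zero_apply] at this
  · exact h

lemma not_isPer_iterate_lt {x : Fin n} {k : ℕ} (hk : k < steps f x) : ¬ IsPer f (f^[k] x) :=
  Nat.find_min (exists_iterate_isPer f x) hk

lemma steps_apply {x : Fin n} (hx : x ∉ per f) : steps f x = steps f (f x) + 1 := by
  have h1 : ∀ k, IsPer f (f^[k] (f x)) ↔ IsPer f (f^[k+1] x) := by
    intro k
    rw [Function.iterate_succ_apply]
  have hpos := steps_pos hx
  have hspec : IsPer f (f^[steps f x] x) := entry_isPer f x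
  have hspec' : IsPer f (f^[steps f x - 1] (f x)) := by
    rw [h1, show steps f x - 1 + 1 = steps f x by omega]
    exact hspec
  have hle : steps f (f x) ≤ steps f x - 1 := Nat.find_le hspec'
  have hge : steps f x - 1 ≤ steps f (f x) := by
    by_contra hcon
    push_neg at hcon
    have : IsPer f (f^[steps f (f x) + 1] x) := by
      rw [← h1]
      exact entry_isPer f (f x)
    exact not_isPer_iterate_lt (by omega) this
  omega

lemma entry_apply {x : Fin n} (hx : x ∉ per f) : entry f (f x) = entry f x := by
  rw [entry, entry, steps_apply hx, ← Function.iterate_succ_apply]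

/-! ### Invariant injective subsets consist of periodic points -/

lemma subset_per_of_invariant {A : Finset (Fin n)} (hinv : ∀ x ∈ A, f x ∈ A)
    (hinj : ∀ x ∈ A, ∀ y ∈ A, f x = f y → x = y) : A ⊆ per f := by
  intro x hx
  have hiter : ∀ m, f^[m] x ∈ A := by
    intro m
    induction m with
    | zero => exact hx
    | succ m ih => rw [Function.iterate_succ_apply']; exact hinv _ ih
  obtain ⟨i, j, hij, hfij⟩ := Finite.exists_ne_map_eq_of_infinite (fun i : ℕ => f^[i] x)
  wlog hlt : i < j generalizing i j
  · exact this j i (Ne.symm hij) hfij.symm (by omega)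
  -- cancel: f^[i] x = f^[j] x with all iterates in A gives x = f^[j-i] x
  have key : ∀ i j : ℕ, i < j → f^[i] x = f^[j] x → x = f^[j-i] x := by
    intro i
    induction i with
    | zero => intro j h hf; simpa using hf
    | succ i ih =>
        intro j h hf
        have hj : j - 1 + 1 = j := by omega
        have : f^[i] x = f^[j-1] x := by
          apply hinj _ (hiter i) _ (hiter (j-1))
          rw [← Function.iterate_succ_apply' f i x, ← Function.iterate_succ_apply' f (j-1) x,
            show (j-1).succ = j by omega]
          exact hf
        have := ih (j-1) (by omega) this
        rwa [show j - 1 - i = j - (i+1) by omega] at this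
  rw [mem_per]
  exact ⟨j - i, by omega, (key i j hlt hfij).symm⟩

lemma mapsTo_per (f : Fin n → Fin n) : ∀ x ∈ per f, f x ∈ per f := by
  intro x hx
  exact mem_per.mpr (mem_per.mp hx).apply

/-! ### The frame lemma: fibers of `f ↦ (per f, f off per f)` -/

lemma per_eq_of_frame {f₀ f : Fin n → Fin n}
    (hoff : ∀ x, x ∉ per f₀ → f x = f₀ x)
    (hmaps : ∀ x ∈ per f₀, f x ∈ per f₀)
    (hinj : ∀ x ∈ per f₀, ∀ y ∈ per f₀, f x = f y → x = y) :
    per f = per f₀ := by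
  have hsub : per f₀ ⊆ per f := subset_per_of_invariant hmaps hinj
  have hiter_mem : ∀ x, x ∈ per f₀ → ∀ k, f^[k] x ∈ per f₀ := by
    intro x hx k
    induction k with
    | zero => exact hx
    | succ k ih => rw [Function.iterate_succ_apply']; exact hmaps _ ih
  -- x outside per f₀ is not f-periodic, by induction on steps f₀ x
  have main : ∀ s : ℕ, ∀ x, x ∉ per f₀ → steps f₀ x = s → ¬ IsPer f x := by
    intro s
    induction s using Nat.strong_induction_on with
    | _ s ih =>
      intro x hx hs hper
      have hfx : f x = f₀ x := hoff x hx
      by_cases hmem : f₀ x ∈ per f₀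
      · -- all further f-iterates of x stay in per f₀, never return to x
        obtain ⟨k, hk, hfk⟩ := hper
        have : f^[k] x ∈ per f₀ := by
          have : f^[k] x = f^[k-1] (f x) := by
            rw [← Function.iterate_succ_apply]
            congr 1
            omega
          rw [this, hfx]
          exact hiter_mem _ hmem _
        rw [hfk] at this
        exact hx this
      · have hstep : steps f₀ (f₀ x) < s := by
          have := steps_apply hx
          omega
        exact ih _ hstep (f₀ x) hmem rfl (hfx ▸ hper.apply)
  ext x
  constructor
  · intro hx
    by_contra hx0
    exact main _ x hx0 rfl (mem_per.mp hx)
  · exact fun hx => hsub hx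


/-! ### Counting functions with invariant splittings -/

def biinv (S : Finset (Fin n)) (f : Fin n → Fin n) : Prop :=
  (∀ x ∈ S, f x ∈ S) ∧ (∀ x, x ∉ S → f x ∉ S)

omit [NeZero n] in
lemma card_biinv (S : Finset (Fin n)) :
    (univ.filter (fun f : Fin n → Fin n => biinv S f)).card
      = S.card ^ S.card * Sᶜ.card ^ Sᶜ.card := by
  rw [← Fintype.card_coe S, ← Fintype.card_coe Sᶜ]
  rw [← Fintype.card_fun (α := {x // x ∈ S}), ← Fintype.card_fun (α := {x // x ∈ Sᶜ})]
  rw [← Fintype.card_prod, ← Finset.card_univ]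
  refine Finset.card_bij'
    (fun f hf => (fun a => ⟨f a, ((mem_filter.mp hf).2).1 a a.2⟩,
                  fun a => ⟨f a, mem_compl.mpr (((mem_filter.mp hf).2).2 a (mem_compl.mp a.2))⟩))
    (fun gh _ => fun x => if hx : x ∈ S then (gh.1 ⟨x, hx⟩ : Fin n)
                  else (gh.2 ⟨x, mem_compl.mpr hx⟩ : Fin n)) ?_ ?_ ?_ ?_
  · intro f hf; exact mem_univ _
  · intro gh _
    rw [mem_filter]
    refine ⟨mem_univ _, ?_, ?_⟩
    · intro x hx
      simp only [dif_pos hx]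
      exact (gh.1 ⟨x, hx⟩).2
    · intro x hx
      simp only [dif_neg hx]
      exact mem_compl.mp (gh.2 ⟨x, mem_compl.mpr hx⟩).2
  · intro f hf
    funext x
    by_cases hx : x ∈ S
    · simp only [dif_pos hx]
    · simp only [dif_neg hx]
  · intro gh _
    refine Prod.ext ?_ ?_
    · funext a
      apply Subtype.ext
      simp only
      simp only [dif_pos a.2]
    · funext a
      apply Subtype.ext
      simp only
      simp only [dif_neg (mem_compl.mp a.2)]

/-! ### Fiber counting -/

variable (f₀ : Fin n → Fin n)

/-- the fiber of the frame map through `f₀` -/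
def fib (f : Fin n → Fin n) : Prop :=
  per f = per f₀ ∧ ∀ x, x ∉ per f₀ → f x = f₀ x

/-- both-invariance of `A` inside `P` -/
def biinvP (P A : Finset (Fin n)) (f : Fin n → Fin n) : Prop :=
  (∀ x ∈ A, f x ∈ A) ∧ (∀ x ∈ P \ A, f x ∈ P \ A)

lemma fib_mk {f : Fin n → Fin n}
    (hoff : ∀ x, x ∉ per f₀ → f x = f₀ x)
    (hmaps : ∀ x ∈ per f₀, f x ∈ per f₀)
    (hinj : ∀ x ∈ per f₀, ∀ y ∈ per f₀, f x = f y → x = y) : fib f₀ f :=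
  ⟨per_eq_of_frame hoff hmaps hinj, hoff⟩

lemma fib_maps {f : Fin n → Fin n} (hf : fib f₀ f) : ∀ x ∈ per f₀, f x ∈ per f₀ := by
  intro x hx
  rw [← hf.1] at hx ⊢
  exact mapsTo_per f x hx

lemma fib_inj {f : Fin n → Fin n} (hf : fib f₀ f) :
    ∀ x ∈ per f₀, ∀ y ∈ per f₀, f x = f y → x = y := by
  intro x hx y hy
  rw [← hf.1] at hx hy
  exact injOn_per (mem_per.mp hx) (mem_per.mp hy)

/-- bijectivity of the restriction of a fiber element to `P` -/
lemma fib_bij {f : Fin n → Fin n} (hf : fib f₀ f) :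
    Function.Bijective (fun a : {x // x ∈ per f₀} => (⟨f a, fib_maps f₀ hf a a.2⟩ : {x // x ∈ per f₀})) := by
  rw [← Finite.injective_iff_bijective]
  intro a b hab
  exact Subtype.ext (fib_inj f₀ hf a a.2 b b.2 (congrArg Subtype.val hab))

lemma card_fib :
    (univ.filter (fun f => fib f₀ f)).card = (per f₀).card.factorial := by
  rw [← Fintype.card_coe (per f₀), ← Fintype.card_perm, ← Finset.card_univ]
  refine Finset.card_bij'
    (fun f hf => Equiv.ofBijective _ (fib_bij f₀ ((mem_filter.mp hf).2)))
    (fun σ _ => fun x => if hx : x ∈ per f₀ then (σ ⟨x, hx⟩ : Fin n) else f₀ x) ?_ ?_ ?_ ?_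
  · intro f hf; exact mem_univ _
  · intro σ _
    rw [mem_filter]
    refine ⟨mem_univ _, fib_mk f₀ ?_ ?_ ?_⟩
    · intro x hx; simp only [dif_neg hx]
    · intro x hx; simp only [dif_pos hx]; exact (σ ⟨x, hx⟩).2
    · intro x hx y hy hxy
      simp only [dif_pos hx, dif_pos hy] at hxy
      have := σ.injective (Subtype.ext hxy)
      exact congrArg Subtype.val this
  · intro f hf
    funext x
    by_cases hx : x ∈ per f₀
    · simp only [dif_pos hx]
      rfl
    · simp only [dif_neg hx]
      exact (((mem_filter.mp hf).2).2 x hx).symm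
  · intro σ _
    apply Equiv.ext
    intro a
    apply Subtype.ext
    show (if hx : (a : Fin n) ∈ per f₀ then (σ ⟨a, hx⟩ : Fin n) else f₀ a) = (σ a : Fin n)
    simp only [dif_pos a.2]

lemma card_fib_biinvP {A : Finset (Fin n)} (hA : A ⊆ per f₀) :
    (univ.filter (fun f => fib f₀ f ∧ biinvP (per f₀) A f)).card
      = A.card.factorial * ((per f₀) \ A).card.factorial := by
  rw [← Fintype.card_coe A, ← Fintype.card_coe ((per f₀) \ A), ← Fintype.card_perm,
    ← Fintype.card_perm, ← Fintype.card_prod, ← Finset.card_univ]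
  have memA : ∀ {f : Fin n → Fin n}, (fib f₀ f ∧ biinvP (per f₀) A f) → ∀ a ∈ A, f a ∈ A :=
    fun hf => hf.2.1
  have memB : ∀ {f : Fin n → Fin n}, (fib f₀ f ∧ biinvP (per f₀) A f) →
      ∀ a ∈ (per f₀) \ A, f a ∈ (per f₀) \ A := fun hf => hf.2.2
  have injA : ∀ {f : Fin n → Fin n} (hf : fib f₀ f ∧ biinvP (per f₀) A f),
      Function.Bijective (fun a : {x // x ∈ A} => (⟨f a, memA hf a a.2⟩ : {x // x ∈ A})) := by
    intro f hf
    rw [← Finite.injective_iff_bijective]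
    intro a b hab
    exact Subtype.ext (fib_inj f₀ hf.1 a (hA a.2) b (hA b.2) (congrArg Subtype.val hab))
  have injB : ∀ {f : Fin n → Fin n} (hf : fib f₀ f ∧ biinvP (per f₀) A f),
      Function.Bijective (fun a : {x // x ∈ (per f₀) \ A} =>
        (⟨f a, memB hf a a.2⟩ : {x // x ∈ (per f₀) \ A})) := by
    intro f hf
    rw [← Finite.injective_iff_bijective]
    intro a b hab
    exact Subtype.ext (fib_inj f₀ hf.1 a (mem_sdiff.mp a.2).1 b (mem_sdiff.mp b.2).1
      (congrArg Subtype.val hab))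
  refine Finset.card_bij'
    (fun f hf => (Equiv.ofBijective _ (injA ((mem_filter.mp hf).2)),
                  Equiv.ofBijective _ (injB ((mem_filter.mp hf).2))))
    (fun στ _ => fun x => if hx : x ∈ A then (στ.1 ⟨x, hx⟩ : Fin n)
        else if hx' : x ∈ (per f₀) \ A then (στ.2 ⟨x, hx'⟩ : Fin n) else f₀ x) ?_ ?_ ?_ ?_
  · intro f hf; exact mem_univ _
  · intro στ _
    rw [mem_filter]
    have hval : ∀ x ∈ per f₀,
        (if hx : x ∈ A then (στ.1 ⟨x, hx⟩ : Fin n)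
         else if hx' : x ∈ (per f₀) \ A then (στ.2 ⟨x, hx'⟩ : Fin n) else f₀ x) ∈ per f₀ := by
      intro x hx
      by_cases hxA : x ∈ A
      · simp only [dif_pos hxA]; exact hA (στ.1 ⟨x, hxA⟩).2
      · simp only [dif_neg hxA, dif_pos (mem_sdiff.mpr ⟨hx, hxA⟩)]
        exact (mem_sdiff.mp (στ.2 ⟨x, _⟩).2).1
    have hoff : ∀ x, x ∉ per f₀ →
        (if hx : x ∈ A then (στ.1 ⟨x, hx⟩ : Fin n)
         else if hx' : x ∈ (per f₀) \ A then (στ.2 ⟨x, hx'⟩ : Fin n) else f₀ x) = f₀ x := by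
      intro x hx
      simp only [dif_neg (fun h => hx (hA h)), dif_neg (fun h => hx (mem_sdiff.mp h).1)]
    have hinj : ∀ x ∈ per f₀, ∀ y ∈ per f₀,
        (if hx : x ∈ A then (στ.1 ⟨x, hx⟩ : Fin n)
         else if hx' : x ∈ (per f₀) \ A then (στ.2 ⟨x, hx'⟩ : Fin n) else f₀ x) =
        (if hy : y ∈ A then (στ.1 ⟨y, hy⟩ : Fin n)
         else if hy' : y ∈ (per f₀) \ A then (στ.2 ⟨y, hy'⟩ : Fin n) else f₀ y) → x = y := by
      intro x hx y hy hxy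
      by_cases hxA : x ∈ A <;> by_cases hyA : y ∈ A
      · simp only [dif_pos hxA, dif_pos hyA] at hxy
        exact congrArg Subtype.val (στ.1.injective (Subtype.ext hxy))
      · simp only [dif_pos hxA, dif_neg hyA, dif_pos (mem_sdiff.mpr ⟨hy, hyA⟩)] at hxy
        exact absurd (hxy ▸ (στ.1 ⟨x, hxA⟩).2)
          (mem_sdiff.mp (στ.2 ⟨y, mem_sdiff.mpr ⟨hy, hyA⟩⟩).2).2
      · simp only [dif_neg hxA, dif_pos (mem_sdiff.mpr ⟨hx, hxA⟩), dif_pos hyA] at hxy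
        exact absurd (hxy ▸ (mem_sdiff.mp (στ.2 ⟨x, mem_sdiff.mpr ⟨hx, hxA⟩⟩).2).2).elim
          (fun h => h ((hxy.symm ▸ (στ.1 ⟨y, hyA⟩).2)))
      · simp only [dif_neg hxA, dif_pos (mem_sdiff.mpr ⟨hx, hxA⟩), dif_neg hyA,
          dif_pos (mem_sdiff.mpr ⟨hy, hyA⟩)] at hxy
        exact congrArg Subtype.val (στ.2.injective (Subtype.ext hxy))
    refine ⟨mem_univ _, fib_mk f₀ hoff hval hinj, ?_, ?_⟩
    · intro x hxA
      simp only [dif_pos hxA]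
      exact (στ.1 ⟨x, hxA⟩).2
    · intro x hx
      simp only [dif_neg (mem_sdiff.mp hx).2, dif_pos hx]
      exact (στ.2 ⟨x, hx⟩).2
  · intro f hf
    funext x
    obtain ⟨-, hfib, hbi⟩ := mem_filter.mp hf
    by_cases hxA : x ∈ A
    · simp only [dif_pos hxA]; rfl
    · by_cases hx' : x ∈ (per f₀) \ A
      · simp only [dif_neg hxA, dif_pos hx']; rfl
      · simp only [dif_neg hxA, dif_neg hx']
        have : x ∉ per f₀ := fun h => hx' (mem_sdiff.mpr ⟨h, hxA⟩)
        exact (hfib.2 x this).symm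
  · intro στ _
    refine Prod.ext ?_ ?_
    · apply Equiv.ext
      intro a
      apply Subtype.ext
      show (if hx : (a : Fin n) ∈ A then _ else _) = (στ.1 a : Fin n)
      simp only [dif_pos a.2]
    · apply Equiv.ext
      intro a
      apply Subtype.ext
      show (if hx : (a : Fin n) ∈ A then _ else _) = (στ.2 a : Fin n)
      simp only [dif_neg (mem_sdiff.mp a.2).2, dif_pos a.2]


/-! ### The frame fibration and the exchange identity -/

noncomputable def cInv (f : Fin n → Fin n) : ℕ :=
  (univ.filter (fun S : Finset (Fin n) => biinv S f)).card

noncomputable def frameMap (f : Fin n → Fin n) : Finset (Fin n) × (Fin n → Fin n) :=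
  (per f, fun x => if x ∈ per f then x else f x)

omit [NeZero n] in
lemma frame_eq_iff {f₀ f : Fin n → Fin n} : frameMap f = frameMap f₀ ↔ fib f₀ f := by
  constructor
  · intro h
    have h1 : per f = per f₀ := congrArg Prod.fst h
    refine ⟨h1, fun x hx => ?_⟩
    have h2 := congrFun (congrArg Prod.snd h) x
    simp only [frameMap] at h2
    rwa [if_neg (h1 ▸ hx), if_neg hx] at h2
  · rintro ⟨h1, h2⟩
    refine Prod.ext h1 ?_
    funext x
    simp only [frameMap]
    by_cases hx : x ∈ per f₀
    · rw [if_pos (h1 ▸ hx), if_pos hx]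
    · rw [if_neg (h1 ▸ hx), if_neg hx]
      exact h2 x hx

lemma biinv_mem_iff_entry_mem {S : Finset (Fin n)} {f : Fin n → Fin n} (hS : biinv S f)
    (x : Fin n) : x ∈ S ↔ entry f x ∈ S := by
  have step : ∀ y, y ∈ S ↔ f y ∈ S := by
    intro y
    constructor
    · exact hS.1 y
    · intro h
      by_contra hy
      exact hS.2 y hy h
  rw [entry]
  generalize steps f x = k
  induction k with
  | zero => rfl
  | succ k ih =>
      rw [Function.iterate_succ_apply', ← step]
      exact ih

lemma cInv_eq_cA (f : Fin n → Fin n) :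
    cInv f = (univ.filter (fun A : Finset (Fin n) => A ⊆ per f ∧ biinvP (per f) A f)).card := by
  refine Finset.card_bij'
    (fun S _ => S ∩ per f)
    (fun A _ => univ.filter (fun x => entry f x ∈ A)) ?_ ?_ ?_ ?_
  · intro S hS
    obtain ⟨-, hbi⟩ := mem_filter.mp hS
    rw [mem_filter]
    refine ⟨mem_univ _, inter_subset_right, ?_, ?_⟩
    · intro x hx
      obtain ⟨hx1, hx2⟩ := mem_inter.mp hx
      exact mem_inter.mpr ⟨hbi.1 x hx1, mapsTo_per f x hx2⟩
    · intro x hx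
      obtain ⟨hx1, hx2⟩ := mem_sdiff.mp hx
      have hxS : x ∉ S := fun h => hx2 (mem_inter.mpr ⟨h, hx1⟩)
      exact mem_sdiff.mpr ⟨mapsTo_per f x hx1, fun h => hbi.2 x hxS (mem_inter.mp h).1⟩
  · intro A hA
    obtain ⟨-, hAP, hbi⟩ := mem_filter.mp hA
    rw [mem_filter]
    refine ⟨mem_univ _, ?_, ?_⟩
    · intro x hx
      rw [mem_filter] at hx ⊢
      refine ⟨mem_univ _, ?_⟩
      by_cases hxP : x ∈ per f
      · rw [entry_of_mem_per hxP] at hx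
        rw [entry_of_mem_per (mapsTo_per f x hxP)]
        exact hbi.1 x hx.2
      · rw [entry_apply hxP]
        exact hx.2
    · intro x hx
      rw [mem_filter] at hx ⊢
      rintro ⟨-, hmem⟩
      apply hx
      refine ⟨mem_univ _, ?_⟩
      by_cases hxP : x ∈ per f
      · rw [entry_of_mem_per hxP]
        rw [entry_of_mem_per (mapsTo_per f x hxP)] at hmem
        by_contra hxA
        have := hbi.2 x (mem_sdiff.mpr ⟨hxP, hxA⟩)
        exact (mem_sdiff.mp this).2 hmem
      · rwa [entry_apply hxP] at hmem
  · intro S hS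
    obtain ⟨-, hbi⟩ := mem_filter.mp hS
    ext x
    rw [mem_filter]
    simp only [mem_univ, true_and]
    rw [mem_inter]
    rw [← biinv_mem_iff_entry_mem hbi x]
    exact ⟨fun h => h.1, fun h => ⟨h, entry_mem_per f x⟩⟩
  · intro A hA
    obtain ⟨-, hAP, hbi⟩ := mem_filter.mp hA
    ext x
    rw [mem_inter, mem_filter]
    simp only [mem_univ, true_and]
    constructor
    · rintro ⟨h1, h2⟩
      rwa [entry_of_mem_per h2] at h1
    · intro hx
      have hxP := hAP hx
      exact ⟨by rwa [entry_of_mem_per hxP], hxP⟩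

lemma sum_factorials (P : Finset (Fin n)) :
    ∑ A ∈ univ.filter (fun A : Finset (Fin n) => A ⊆ P),
        (A.card.factorial * (P \ A).card.factorial)
      = P.card.factorial * (P.card + 1) := by
  have h1 : univ.filter (fun A : Finset (Fin n) => A ⊆ P) = P.powerset := by
    ext A
    simp [Finset.mem_powerset]
  rw [h1, Finset.sum_powerset]
  have h2 : ∀ j ∈ Finset.range (P.card + 1),
      ∑ A ∈ Finset.powersetCard j P, (A.card.factorial * (P \ A).card.factorial)
        = P.card.factorial := by
    intro j hj
    rw [Finset.mem_range] at hj
    have : ∀ A ∈ Finset.powersetCard j P,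
        A.card.factorial * (P \ A).card.factorial = j.factorial * (P.card - j).factorial := by
      intro A hA
      obtain ⟨hAP, hAc⟩ := Finset.mem_powersetCard.mp hA
      rw [hAc, Finset.card_sdiff_of_subset hAP, hAc]
    rw [Finset.sum_congr rfl this, Finset.sum_const, Finset.card_powersetCard, smul_eq_mul]
    rw [← Nat.choose_mul_factorial_mul_factorial (by omega : j ≤ P.card), mul_assoc]
  rw [Finset.sum_congr rfl h2, Finset.sum_const, Finset.card_range, smul_eq_mul, mul_comm]

lemma exchange :
    ∑ f : Fin n → Fin n, cInv f = ∑ f : Fin n → Fin n, ((per f).card + 1) := by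
  have hmaps : ∀ f ∈ (univ : Finset (Fin n → Fin n)), frameMap f ∈ univ.image frameMap :=
    fun f hf => Finset.mem_image_of_mem _ hf
  rw [← Finset.sum_fiberwise_of_maps_to hmaps cInv,
    ← Finset.sum_fiberwise_of_maps_to hmaps (fun f => (per f).card + 1)]
  apply Finset.sum_congr rfl
  intro y hy
  obtain ⟨f₀, -, rfl⟩ := Finset.mem_image.mp hy
  have hfilter : univ.filter (fun f => frameMap f = frameMap f₀) = univ.filter (fib f₀) := by
    apply Finset.filter_congr
    intro f _
    exact ⟨frame_eq_iff.mp, frame_eq_iff.mpr⟩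
  rw [hfilter]
  have hper : ∀ f ∈ univ.filter (fib f₀), per f = per f₀ := by
    intro f hf
    exact ((mem_filter.mp hf).2).1
  -- right side
  have hR : ∑ f ∈ univ.filter (fib f₀), ((per f).card + 1)
      = (per f₀).card.factorial * ((per f₀).card + 1) := by
    rw [Finset.sum_congr rfl (fun f hf => by rw [hper f hf])]
    rw [Finset.sum_const, card_fib, smul_eq_mul]
  rw [hR]
  -- left side
  have hL1 : ∀ f ∈ univ.filter (fib f₀),
      cInv f = ∑ A ∈ (univ : Finset (Finset (Fin n))),
        (if A ⊆ per f₀ ∧ biinvP (per f₀) A f then 1 else 0) := by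
    intro f hf
    rw [cInv_eq_cA f, hper f hf, Finset.card_filter]
  rw [Finset.sum_congr rfl hL1,
    Finset.sum_comm (s := univ.filter (fib f₀)) (t := (univ : Finset (Finset (Fin n))))]
  have hL2 : ∀ A ∈ (univ : Finset (Finset (Fin n))),
      (∑ f ∈ univ.filter (fib f₀), if A ⊆ per f₀ ∧ biinvP (per f₀) A f then 1 else 0)
      = if A ⊆ per f₀ then A.card.factorial * ((per f₀) \ A).card.factorial else 0 := by
    intro A _
    by_cases hAP : A ⊆ per f₀
    · rw [if_pos hAP, ← card_fib_biinvP f₀ hAP, Finset.card_filter, Finset.sum_filter]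
      apply Finset.sum_congr rfl
      intro f _
      by_cases hfib : fib f₀ f
      · simp [hfib, hAP]
      · simp [hfib]
    · rw [if_neg hAP]
      apply Finset.sum_eq_zero
      intro f _
      rw [if_neg (fun h => hAP h.1)]
  rw [Finset.sum_congr rfl hL2, ← Finset.sum_filter]
  exact sum_factorials (per f₀)


lemma per_nonempty (f : Fin n → Fin n) : (per f).Nonempty :=
  ⟨entry f ⟨0, Nat.pos_of_ne_zero (NeZero.ne n)⟩,
    entry_mem_per f ⟨0, Nat.pos_of_ne_zero (NeZero.ne n)⟩⟩

lemma sum_cInv_eq_A : ∑ f : Fin n → Fin n, cInv f = A n + (n ^ n + n ^ n) := by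
  have h1 : ∑ f : Fin n → Fin n, cInv f
      = ∑ S : Finset (Fin n), (univ.filter (fun f : Fin n → Fin n => biinv S f)).card := by
    unfold cInv
    simp only [Finset.card_filter]
    rw [Finset.sum_comm]
  rw [h1]
  have h2 : ∀ S ∈ (univ : Finset (Finset (Fin n))),
      (univ.filter (fun f : Fin n → Fin n => biinv S f)).card
      = S.card ^ S.card * (n - S.card) ^ (n - S.card) := by
    intro S _
    rw [card_biinv S, Finset.card_compl, Fintype.card_fin]
  rw [Finset.sum_congr rfl h2]
  rw [show (univ : Finset (Finset (Fin n))) = (univ : Finset (Fin n)).powerset from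
    (Finset.powerset_univ).symm, Finset.sum_powerset]
  have h3 : ∀ j ∈ Finset.range ((univ : Finset (Fin n)).card + 1),
      (∑ S ∈ Finset.powersetCard j (univ : Finset (Fin n)),
        (S.card ^ S.card * (n - S.card) ^ (n - S.card)))
      = n.choose j * (j ^ j * (n - j) ^ (n - j)) := by
    intro j hj
    rw [Finset.sum_congr rfl (fun S hS => by
        rw [(Finset.mem_powersetCard.mp hS).2]), Finset.sum_const,
      Finset.card_powersetCard, Finset.card_univ, Fintype.card_fin, smul_eq_mul]
  rw [Finset.sum_congr rfl h3]
  have hn : n ≠ 0 := NeZero.ne n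
  have hsplit : Finset.range ((univ : Finset (Fin n)).card + 1)
      = insert 0 (insert n (Finset.Ioo 0 n)) := by
    ext k
    simp only [Finset.card_univ, Fintype.card_fin, Finset.mem_range, Finset.mem_insert,
      Finset.mem_Ioo]
    omega
  rw [hsplit, Finset.sum_insert (by simp only [Finset.mem_insert, Finset.mem_Ioo]; omega),
    Finset.sum_insert (by simp only [Finset.mem_Ioo]; omega)]
  have e0 : n.choose 0 * (0 ^ 0 * (n - 0) ^ (n - 0)) = n ^ n := by simp
  have en : n.choose n * (n ^ n * (n - n) ^ (n - n)) = n ^ n := by simp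
  rw [e0, en]
  have hA : (∑ j ∈ Finset.Ioo 0 n, n.choose j * (j ^ j * (n - j) ^ (n - j))) = A n := by
    rw [A]
    exact Finset.sum_congr rfl (fun j _ => by ring)
  rw [hA]
  omega

/-! ### Stage E : the Joyal tree of an endofunction -/

lemma IsPath.getVert_inj {V : Type*} {G : SimpleGraph V} {u v : V} {p : G.Walk u v}
    (hp : p.IsPath) : ∀ {i j : ℕ}, i ≤ p.length → j ≤ p.length →
      p.getVert i = p.getVert j → i = j := by
  induction p with
  | nil => intro i j hi hj _; simp at hi hj; omega
  | cons hadj q ih =>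
      rw [Walk.cons_isPath_iff] at hp
      intro i j hi hj h
      match i, j with
      | 0, 0 => rfl
      | 0, (j+1) =>
          exfalso
          apply hp.2
          rw [Walk.mem_support_iff_exists_getVert]
          refine ⟨j, ?_, ?_⟩
          · rw [Walk.getVert_zero] at h
            rw [← Walk.getVert_cons_succ q hadj]
            exact h.symm
          · simp only [Walk.length_cons] at hj; omega
      | (i+1), 0 =>
          exfalso
          apply hp.2
          rw [Walk.mem_support_iff_exists_getVert]
          refine ⟨i, ?_, ?_⟩
          · rw [Walk.getVert_zero] at h
            rw [← Walk.getVert_cons_succ q hadj]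
            exact h
          · simp only [Walk.length_cons] at hi; omega
      | (i+1), (j+1) =>
          rw [Walk.getVert_cons_succ, Walk.getVert_cons_succ] at h
          simp only [Walk.length_cons] at hi hj
          have := ih hp.1 (by omega) (by omega) h
          omega

noncomputable def pc (f : Fin n → Fin n) : ℕ := (per f).card

lemma pc_pos (f : Fin n → Fin n) : 0 < pc f := Finset.card_pos.mpr (per_nonempty f)

noncomputable def srt (f : Fin n → Fin n) (i : Fin (pc f)) : Fin n :=
  ((per f).orderIsoOfFin rfl i : Fin n)

noncomputable def wd (f : Fin n → Fin n) (i : Fin (pc f)) : Fin n := f (srt f i)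

lemma srt_mem (f : Fin n → Fin n) (i : Fin (pc f)) : srt f i ∈ per f :=
  ((per f).orderIsoOfFin rfl i).2

lemma srt_inj {f : Fin n → Fin n} {i j : Fin (pc f)} (h : srt f i = srt f j) : i = j := by
  have := ((per f).orderIsoOfFin rfl).injective (Subtype.ext h)
  exact this

lemma wd_mem (f : Fin n → Fin n) (i : Fin (pc f)) : wd f i ∈ per f :=
  mapsTo_per f _ (srt_mem f i)

lemma wd_inj {f : Fin n → Fin n} {i j : Fin (pc f)} (h : wd f i = wd f j) : i = j :=
  srt_inj (injOn_per (mem_per.mp (srt_mem f i)) (mem_per.mp (srt_mem f j)) h)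

lemma wd_surj (f : Fin n → Fin n) {x : Fin n} (hx : x ∈ per f) : ∃ i, wd f i = x := by
  have himg : Finset.image (wd f) univ = per f := by
    apply Finset.eq_of_subset_of_card_le
    · intro y hy
      obtain ⟨i, -, rfl⟩ := Finset.mem_image.mp hy
      exact wd_mem f i
    · rw [Finset.card_image_of_injective _ (fun i j h => wd_inj h), Finset.card_univ,
        Fintype.card_fin]
      rfl
  have := himg ▸ hx
  obtain ⟨i, -, hi⟩ := Finset.mem_image.mp this
  exact ⟨i, hi⟩

def spineE (f : Fin n → Fin n) : Set (Sym2 (Fin n)) :=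
  {e | ∃ i j : Fin (pc f), (i : ℕ) + 1 = (j : ℕ) ∧ e = s(wd f i, wd f j)}

def tailE (f : Fin n → Fin n) : Set (Sym2 (Fin n)) :=
  {e | ∃ x, x ∉ per f ∧ e = s(x, f x)}

def tr (f : Fin n → Fin n) : SimpleGraph (Fin n) :=
  SimpleGraph.fromEdgeSet (spineE f ∪ tailE f)

lemma tail_ne {f : Fin n → Fin n} {x : Fin n} (hx : x ∉ per f) : x ≠ f x := by
  intro h
  exact hx (mem_per.mpr ⟨1, one_pos, by simp [← h]⟩)

lemma adj_tail {f : Fin n → Fin n} {x : Fin n} (hx : x ∉ per f) : (tr f).Adj x (f x) :=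
  (SimpleGraph.fromEdgeSet_adj _).mpr ⟨Or.inr ⟨x, hx, rfl⟩, tail_ne hx⟩

lemma adj_spine {f : Fin n → Fin n} {i j : Fin (pc f)} (hij : (i : ℕ) + 1 = (j : ℕ)) :
    (tr f).Adj (wd f i) (wd f j) := by
  refine (SimpleGraph.fromEdgeSet_adj _).mpr ⟨Or.inl ⟨i, j, hij, rfl⟩, ?_⟩
  intro h
  have := wd_inj h
  subst this
  omega

noncomputable def gfun (f : Fin n → Fin n) : ℕ → Fin n :=
  fun k => if h : k < pc f then wd f ⟨k, h⟩ else wd f ⟨0, pc_pos f⟩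

lemma gfun_adj (f : Fin n → Fin n) :
    ∀ k, k + 1 ≤ pc f - 1 → (tr f).Adj (gfun f k) (gfun f (k+1))  := by
  intro k hk
  have h1 : k < pc f := by omega
  have h2 : k + 1 < pc f := by omega
  rw [gfun, gfun]
  simp only [dif_pos h1, dif_pos h2]
  exact adj_spine rfl

noncomputable def spine (f : Fin n → Fin n) :
    (tr f).Walk (gfun f (pc f - 1 - (pc f - 1))) (gfun f (pc f - 1)) :=
  walkOfFn (gfun f) (gfun_adj f) (pc f - 1) le_rfl

noncomputable def av (f : Fin n → Fin n) : Fin n := gfun f (pc f - 1 - (pc f - 1))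
noncomputable def bv (f : Fin n → Fin n) : Fin n := gfun f (pc f - 1)

lemma av_eq (f : Fin n → Fin n) : av f = wd f ⟨0, pc_pos f⟩ := by
  rw [av, show pc f - 1 - (pc f - 1) = 0 by omega, gfun, dif_pos (pc_pos f)]

lemma bv_eq (f : Fin n → Fin n) : bv f = wd f ⟨pc f - 1, by have := pc_pos f; omega⟩ := by
  rw [bv, gfun, dif_pos (by have := pc_pos f; omega : pc f - 1 < pc f)]

lemma spine_isPath (f : Fin n → Fin n) : (spine f).IsPath := by
  apply walkOfFn_isPath
  intro i j hi hj hg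
  have hp := pc_pos f
  have hi' : i < pc f := by omega
  have hj' : j < pc f := by omega
  simp only [gfun, dif_pos hi', dif_pos hj'] at hg
  exact congrArg Fin.val (wd_inj hg)

lemma spine_length (f : Fin n → Fin n) : (spine f).length = pc f - 1 :=
  walkOfFn_length _ _ _ _

lemma spine_getVert (f : Fin n → Fin n) {j : ℕ} (hj : j ≤ pc f - 1) :
    (spine f).getVert j = gfun f j := by
  rw [spine, walkOfFn_getVert _ _ _ _ j hj]
  congr 1
  omega

lemma spine_support (f : Fin n → Fin n) :
    (spine f).support = (List.range (pc f - 1 + 1)).map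
      (fun j => gfun f (pc f - 1 - (pc f - 1) + j)) :=
  walkOfFn_support _ _ _ _

lemma mem_spine_support_iff (f : Fin n → Fin n) {x : Fin n} :
    x ∈ (spine f).support ↔ x ∈ per f := by
  rw [spine_support]
  constructor
  · intro hx
    obtain ⟨j, hj, rfl⟩ := List.mem_map.mp hx
    rw [List.mem_range] at hj
    rw [gfun]
    split
    · exact wd_mem f _
    · exact wd_mem f _
  · intro hx
    obtain ⟨i, rfl⟩ := wd_surj f hx
    rw [List.mem_map]
    refine ⟨(i : ℕ), List.mem_range.mpr (by have := i.isLt; omega), ?_⟩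
    rw [show pc f - 1 - (pc f - 1) + (i : ℕ) = (i : ℕ) by omega, gfun, dif_pos i.isLt]

lemma spine_support_toFinset (f : Fin n → Fin n) :
    (spine f).support.toFinset = per f := by
  ext x
  rw [List.mem_toFinset, mem_spine_support_iff]

/-- Reachability: everything reaches `bv f`. -/
lemma reach_bv (f : Fin n → Fin n) (x : Fin n) : (tr f).Reachable x (bv f) := by
  -- first, periodic points
  have hper : ∀ y, y ∈ per f → (tr f).Reachable y (bv f) := by
    intro y hy
    obtain ⟨i, rfl⟩ := wd_surj f hy
    have hle : pc f - 1 - (pc f - 1 - (i : ℕ)) = (i : ℕ) := by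
      have := i.isLt; omega
    refine ⟨(walkOfFn (gfun f) (gfun_adj f) (pc f - 1 - (i : ℕ))
      (by omega)).copy ?_ rfl⟩
    rw [hle, gfun, dif_pos i.isLt]
  -- general: induction on steps
  suffices h : ∀ s x, steps f x = s → (tr f).Reachable x (bv f) by
    exact h (steps f x) x rfl
  intro s
  induction s with
  | zero =>
      intro x hs
      apply hper
      have : entry f x = x := by
        rw [entry, hs, Function.iterate_zero_apply]
      rw [← this]
      exact entry_mem_per f x
  | succ s ih =>
      intro x hs
      have hx : x ∉ per f := by
        intro hx
        rw [steps_eq_zero hx] at hs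
        omega
      have h1 : steps f (f x) = s := by
        have := steps_apply hx
        omega
      exact (adj_tail hx).reachable.trans (ih (f x) h1)

lemma tr_connected (f : Fin n → Fin n) : (tr f).Connected := by
  rw [SimpleGraph.connected_iff]
  refine ⟨fun u v => (reach_bv f u).trans (reach_bv f v).symm, ⟨⟨0, Nat.pos_of_ne_zero (NeZero.ne n)⟩⟩⟩

/-- crossing characterization for the tail cut -/
lemma isBridge_tail {f : Fin n → Fin n} {x : Fin n} (hx : x ∉ per f) :
    (tr f).IsBridge s(x, f x) := by
  rw [SimpleGraph.isBridge_iff]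
  set S : Set (Fin n) := {y | ∃ j : ℕ, f^[j] y = x} with hS
  have hxS : x ∈ S := ⟨0, rfl⟩
  have hfxS : f x ∉ S := by
    rintro ⟨j, hj⟩
    apply hx
    rw [mem_per]
    exact ⟨j + 1, by omega, by rwa [Function.iterate_succ_apply]⟩
  apply not_reachable_cut ?_ hxS hfxS
  intro u v huv
  rw [SimpleGraph.deleteEdges_adj] at huv
  obtain ⟨huv1, huv2⟩ := huv
  have hne : s(u, v) ≠ s(x, f x) := by
    intro h
    exact huv2 (Set.mem_singleton_iff.mpr h)
  have hmem := ((SimpleGraph.fromEdgeSet_adj _).mp huv1).1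
  -- key: for any correctly-formed edge, endpoints on same side
  have key : ∀ α β : Fin n, s(α, β) ∈ spineE f ∪ tailE f → s(α, β) ≠ s(x, f x) →
      (α ∈ S ↔ β ∈ S) := by
    intro α β hαβ hneq
    rcases hαβ with ⟨i, j, hij, hs⟩ | ⟨y, hy, hs⟩
    · -- spine edge: both endpoints periodic, neither in S
      have hwd : ∀ k : Fin (pc f), wd f k ∉ S := by
        intro k hk
        obtain ⟨j', hj'⟩ := hk
        apply hx
        rw [← hj']
        exact mem_per.mpr ((mem_per.mp (wd_mem f k)).iterate j')
      rcases Sym2.eq_iff.mp hs with ⟨rfl, rfl⟩ | ⟨rfl, rfl⟩ <;>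
        simp [hwd i, hwd j]
    · -- tail edge s(y, f y), y ≠ x
      have hyx : y ≠ x := by
        rintro rfl
        exact hneq hs
      have hiff : y ∈ S ↔ f y ∈ S := by
        constructor
        · rintro ⟨j, hj⟩
          rcases Nat.eq_zero_or_pos j with rfl | hjpos
          · exact absurd hj hyx
          · refine ⟨j - 1, ?_⟩
            have hsucc : f^[j-1+1] y = x := by
              rw [show j - 1 + 1 = j by omega]
              exact hj
            rwa [Function.iterate_succ_apply] at hsucc
        · rintro ⟨j, hj⟩
          exact ⟨j + 1, by rwa [Function.iterate_succ_apply]⟩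
      rcases Sym2.eq_iff.mp hs with ⟨rfl, rfl⟩ | ⟨rfl, rfl⟩
      · exact hiff
      · exact hiff.symm
  exact key u v hmem hne

lemma isBridge_spine {f : Fin n → Fin n} {i j : Fin (pc f)} (hij : (i : ℕ) + 1 = (j : ℕ)) :
    (tr f).IsBridge s(wd f i, wd f j) := by
  rw [SimpleGraph.isBridge_iff]
  set S : Set (Fin n) := {y | ∃ i' : Fin (pc f), (i' : ℕ) ≤ (i : ℕ) ∧ entry f y = wd f i'}
    with hS
  have hwdmem : ∀ k : Fin (pc f), wd f k ∈ S ↔ (k : ℕ) ≤ (i : ℕ) := by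
    intro k
    constructor
    · rintro ⟨i', hle, heq⟩
      rw [entry_of_mem_per (wd_mem f k)] at heq
      rw [wd_inj heq]
      exact hle
    · intro h
      exact ⟨k, h, entry_of_mem_per (wd_mem f k)⟩
  have hxS : wd f i ∈ S := (hwdmem i).mpr le_rfl
  have hyS : wd f j ∉ S := by
    rw [hwdmem j]
    omega
  apply not_reachable_cut ?_ hxS hyS
  intro u v huv
  rw [SimpleGraph.deleteEdges_adj] at huv
  obtain ⟨huv1, huv2⟩ := huv
  have hne : s(u, v) ≠ s(wd f i, wd f j) := by
    intro h
    exact huv2 (Set.mem_singleton_iff.mpr h)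
  have hmem := ((SimpleGraph.fromEdgeSet_adj _).mp huv1).1
  have key : ∀ α β : Fin n, s(α, β) ∈ spineE f ∪ tailE f → s(α, β) ≠ s(wd f i, wd f j) →
      (α ∈ S ↔ β ∈ S) := by
    intro α β hαβ hneq
    rcases hαβ with ⟨i', j', hij', hs⟩ | ⟨y, hy, hs⟩
    · -- spine edge with i' ≠ i
      have hii' : (i' : ℕ) ≠ (i : ℕ) := by
        intro h
        apply hneq
        rw [hs]
        have h1 : i' = i := Fin.ext h
        have h2 : j' = j := Fin.ext (by omega)
        rw [h1, h2]
      have hiff : wd f i' ∈ S ↔ wd f j' ∈ S := by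
        rw [hwdmem, hwdmem]
        omega
      rcases Sym2.eq_iff.mp hs with ⟨rfl, rfl⟩ | ⟨rfl, rfl⟩
      · exact hiff
      · exact hiff.symm
    · -- tail edge
      have hiff : y ∈ S ↔ f y ∈ S := by
        rw [hS]
        simp only [Set.mem_setOf_eq]
        rw [entry_apply hy]
      rcases Sym2.eq_iff.mp hs with ⟨rfl, rfl⟩ | ⟨rfl, rfl⟩
      · exact hiff
      · exact hiff.symm
  exact key u v hmem hne

lemma tr_isAcyclic (f : Fin n → Fin n) : (tr f).IsAcyclic := by
  rw [SimpleGraph.isAcyclic_iff_forall_edge_isBridge]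
  intro e he
  rw [tr, SimpleGraph.edgeSet_fromEdgeSet] at he
  obtain ⟨hmem, -⟩ := he
  rcases hmem with ⟨i, j, hij, rfl⟩ | ⟨x, hx, rfl⟩
  · exact isBridge_spine hij
  · exact isBridge_tail hx

lemma tr_isTree (f : Fin n → Fin n) : (tr f).IsTree :=
  ⟨tr_connected f, tr_isAcyclic f⟩

lemma tr_dist (f : Fin n → Fin n) : (tr f).dist (av f) (bv f) = pc f - 1 := by
  unfold av bv
  rw [← path_length_eq_dist (tr_isAcyclic f) (spine f) (spine_isPath f), spine_length]

/-! ### Stage F : the inverse map ψ -/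

omit [NeZero n] in
lemma append_getVert_one {V : Type*} {G : SimpleGraph V} {u v w : V} (p : G.Walk u v)
    (q : G.Walk v w) (hp : 0 < p.length) : (p.append q).getVert 1 = p.getVert 1 := by
  rw [Walk.getVert_append]
  by_cases h : 1 < p.length
  · rw [if_pos h]
  · have hlen : p.length = 1 := by omega
    rw [if_neg h, show (1 : ℕ) - p.length = 0 by omega, Walk.getVert_zero]
    conv_rhs => rw [show (1 : ℕ) = p.length from hlen.symm]
    rw [Walk.getVert_length]

noncomputable def pth {H : SimpleGraph (Fin n)} (hH : H.IsTree) (x y : Fin n) : H.Walk x y :=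
  (hH.existsUnique_path x y).choose

lemma pth_isPath {H : SimpleGraph (Fin n)} (hH : H.IsTree) (x y : Fin n) :
    (pth hH x y).IsPath :=
  (hH.existsUnique_path x y).choose_spec.1

lemma pth_unique {H : SimpleGraph (Fin n)} (hH : H.IsTree) {x y : Fin n} {p : H.Walk x y}
    (hp : p.IsPath) : p = pth hH x y :=
  (hH.existsUnique_path x y).choose_spec.2 p hp

noncomputable def psi (H : SimpleGraph (Fin n)) (x0 y0 : Fin n) : Fin n → Fin n :=
  if hH : H.IsTree then
    fun x =>
      if hx : x ∈ (pth hH x0 y0).support.toFinset then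
        (pth hH x0 y0).getVert
          ((((pth hH x0 y0).support.toFinset.orderIsoOfFin rfl).symm ⟨x, hx⟩ :
            Fin (pth hH x0 y0).support.toFinset.card) : ℕ)
      else (pth hH x x0).getVert 1
  else id

omit [NeZero n] in
lemma rank_congr {S T : Finset (Fin n)} (h : S = T) (x : Fin n) (hx : x ∈ S) (hx' : x ∈ T) :
    (((S.orderIsoOfFin rfl).symm ⟨x, hx⟩ : Fin S.card) : ℕ)
      = (((T.orderIsoOfFin rfl).symm ⟨x, hx'⟩ : Fin T.card) : ℕ) := by
  subst h
  rfl

/-! tail walk from a vertex to its entry point -/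

noncomputable def tailW (f : Fin n → Fin n) :
    (s : ℕ) → (x : Fin n) → steps f x = s → (tr f).Walk x (entry f x)
  | 0, x, h => Walk.nil.copy rfl (by rw [entry, h, Function.iterate_zero_apply])
  | (s+1), x, h =>
      have hx : x ∉ per f := by
        intro hmem
        rw [steps_eq_zero hmem] at h
        omega
      (Walk.cons (adj_tail hx) (tailW f s (f x) (by
          have := steps_apply hx
          omega))).copy rfl (entry_apply hx)

lemma tailW_support (f : Fin n → Fin n) :
    ∀ (s : ℕ) (x : Fin n) (h : steps f x = s),
      ∀ y ∈ (tailW f s x h).support, ∃ k, k ≤ s ∧ y = f^[k] x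
  | 0, x, h => by
      intro y hy
      simp only [tailW, Walk.support_copy, Walk.support_nil, List.mem_singleton] at hy
      exact ⟨0, le_rfl, by simp [hy]⟩
  | (s+1), x, h => by
      intro y hy
      simp only [tailW, Walk.support_copy, Walk.support_cons, List.mem_cons] at hy
      rcases hy with rfl | hy
      · exact ⟨0, by omega, by simp⟩
      · obtain ⟨k, hk, rfl⟩ := tailW_support f s (f x) _ y hy
        exact ⟨k + 1, by omega, by rw [Function.iterate_succ_apply]⟩

lemma tailW_isPath (f : Fin n → Fin n) :
    ∀ (s : ℕ) (x : Fin n) (h : steps f x = s), (tailW f s x h).IsPath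
  | 0, x, h => by
      simp only [tailW, Walk.isPath_copy]
      exact Walk.IsPath.nil
  | (s+1), x, h => by
      have hx : x ∉ per f := by
        intro hmem
        rw [steps_eq_zero hmem] at h
        omega
      simp only [tailW, Walk.isPath_copy]
      rw [Walk.cons_isPath_iff]
      refine ⟨tailW_isPath f s (f x) _, ?_⟩
      intro hmem
      obtain ⟨k, hk, hkx⟩ := tailW_support f s (f x) _ x hmem
      apply hx
      rw [mem_per]
      exact ⟨k + 1, by omega, by rw [Function.iterate_succ_apply, ← hkx]⟩

lemma tailW_length (f : Fin n → Fin n) :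
    ∀ (s : ℕ) (x : Fin n) (h : steps f x = s), (tailW f s x h).length = s
  | 0, x, h => by simp [tailW]
  | (s+1), x, h => by
      simp only [tailW, Walk.length_copy, Walk.length_cons]
      rw [tailW_length f s (f x) _]

lemma tailW_getVert_one (f : Fin n → Fin n) (s : ℕ) (x : Fin n) (h : steps f x = s)
    (hs : 0 < s) : (tailW f s x h).getVert 1 = f x := by
  match s with
  | 0 => omega
  | (s+1) =>
      simp only [tailW, Walk.getVert_copy]
      rw [Walk.getVert_cons _ _ (by omega)]
      simp

/-! walk from a periodic point back to `av` along the spine -/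

noncomputable def toAv (f : Fin n → Fin n) (jv : ℕ) (hjv : jv ≤ pc f - 1) :
    (tr f).Walk (gfun f jv) (av f) :=
  (((walkOfFn (gfun f) (fun k hk => gfun_adj f k (le_trans hk hjv)) jv le_rfl).copy
      (congrArg (gfun f) (show jv - jv = 0 by omega)) rfl).reverse).copy rfl
    (congrArg (gfun f) (show (0 : ℕ) = pc f - 1 - (pc f - 1) by omega))

lemma toAv_support (f : Fin n → Fin n) (jv : ℕ) (hjv : jv ≤ pc f - 1) :
    ∀ y ∈ (toAv f jv hjv).support, ∃ j, j ≤ jv ∧ y = gfun f j := by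
  intro y hy
  simp only [toAv, av, Walk.support_copy, Walk.support_reverse, List.mem_reverse] at hy
  rw [walkOfFn_support] at hy
  obtain ⟨j, hj, rfl⟩ := List.mem_map.mp hy
  rw [List.mem_range] at hj
  exact ⟨jv - jv + j, by omega, rfl⟩

lemma toAv_isPath (f : Fin n → Fin n) (jv : ℕ) (hjv : jv ≤ pc f - 1) :
    (toAv f jv hjv).IsPath := by
  simp only [toAv, av, Walk.isPath_copy]
  apply Walk.IsPath.reverse
  rw [Walk.isPath_copy]
  apply walkOfFn_isPath
  intro i j hi hj hg
  have hp := pc_pos f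
  have hi' : i < pc f := by omega
  have hj' : j < pc f := by omega
  simp only [gfun, dif_pos hi', dif_pos hj'] at hg
  exact congrArg Fin.val (wd_inj hg)

/-! the full walk from any vertex to `av f` -/

noncomputable def entryIdx (f : Fin n → Fin n) (x : Fin n) : Fin (pc f) :=
  (wd_surj f (entry_mem_per f x)).choose

lemma entryIdx_spec (f : Fin n → Fin n) (x : Fin n) : wd f (entryIdx f x) = entry f x :=
  (wd_surj f (entry_mem_per f x)).choose_spec

lemma gfun_entryIdx (f : Fin n → Fin n) (x : Fin n) :
    gfun f ((entryIdx f x : ℕ)) = entry f x := by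
  rw [gfun, dif_pos (entryIdx f x).isLt, Fin.eta, entryIdx_spec]

noncomputable def toA (f : Fin n → Fin n) (x : Fin n) : (tr f).Walk x (av f) :=
  (tailW f (steps f x) x rfl).append
    ((toAv f ((entryIdx f x : ℕ)) (by have := (entryIdx f x).isLt; omega)).copy
      (gfun_entryIdx f x) rfl)

lemma toA_isPath (f : Fin n → Fin n) (x : Fin n) : (toA f x).IsPath := by
  rw [Walk.isPath_def, toA, Walk.support_append]
  apply List.Nodup.append
  · exact Walk.isPath_def _ |>.mp (tailW_isPath f (steps f x) x rfl)
  · apply (List.tail_sublist _).nodup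
    rw [Walk.support_copy]
    exact Walk.isPath_def _ |>.mp (toAv_isPath f _ _)
  · -- disjointness
    intro y hy1 hy2
    obtain ⟨k, hk, rfl⟩ := tailW_support f (steps f x) x rfl y hy1
    set Q := (toAv f ((entryIdx f x : ℕ)) (by have := (entryIdx f x).isLt; omega)).copy
      (gfun_entryIdx f x) rfl with hQ
    have hyQ : f^[k] x ∈ Q.support := List.mem_of_mem_tail hy2
    have hyper : f^[k] x ∈ per f := by
      obtain ⟨j, hj, hjy⟩ := by
        have := toAv_support f ((entryIdx f x : ℕ)) (by have := (entryIdx f x).isLt; omega)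
        rw [hQ, Walk.support_copy] at hyQ
        exact this _ hyQ
      rw [hjy, gfun]
      split
      · exact wd_mem f _
      · exact wd_mem f _
    have hkeq : k = steps f x := by
      by_contra hne
      exact not_isPer_iterate_lt (by omega) (mem_per.mp hyper)
    -- so y = entry f x, the head of Q, contradiction with y in the tail
    have hhead : f^[k] x = entry f x := by rw [hkeq]; rfl
    have hnodup : Q.support.Nodup := by
      show ((toAv f ((entryIdx f x : ℕ)) (by have := (entryIdx f x).isLt; omega)).copy
        (gfun_entryIdx f x) rfl).support.Nodup
      rw [Walk.support_copy]
      exact Walk.isPath_def _ |>.mp (toAv_isPath f _ _)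
    have hQc : Q.support = entry f x :: Q.support.tail := Walk.support_eq_cons Q
    have h2 : (entry f x :: Q.support.tail).Nodup := hQc ▸ hnodup
    have hy2' : entry f x ∈ Q.support.tail := by
      have := hy2
      rw [hhead] at this
      exact this
    exact (List.nodup_cons.mp h2).1 hy2'

lemma toA_length_pos (f : Fin n → Fin n) (x : Fin n) (hx : x ∉ per f) :
    0 < (tailW f (steps f x) x rfl).length := by
  rw [tailW_length]
  exact steps_pos hx

lemma toA_getVert_one (f : Fin n → Fin n) (x : Fin n) (hx : x ∉ per f) :
    (toA f x).getVert 1 = f x := by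
  rw [toA, append_getVert_one _ _ (toA_length_pos f x hx)]
  exact tailW_getVert_one f (steps f x) x rfl (steps_pos hx)

/-! ### Stage G : the two bijection identities -/

lemma psi_tr (f : Fin n → Fin n) : psi (tr f) (av f) (bv f) = f := by
  have hT := tr_isTree f
  have hspine : spine f = pth hT (av f) (bv f) := pth_unique hT (spine_isPath f)
  have hsupp : (pth hT (av f) (bv f)).support.toFinset = per f := by
    rw [← hspine]
    exact spine_support_toFinset f
  funext x
  by_cases hx : x ∈ per f
  · have hxS : x ∈ (pth hT (av f) (bv f)).support.toFinset := by rw [hsupp]; exact hx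
    rw [psi]
    simp only [dif_pos hT, dif_pos hxS]
    have hrank := rank_congr hsupp x hxS hx
    rw [hrank]
    have hpc : (per f).card = pc f := rfl
    set i : Fin (pc f) := (((per f).orderIsoOfFin rfl).symm ⟨x, hx⟩ : Fin (per f).card)
      with hidef
    have hle : (i : ℕ) ≤ pc f - 1 := by
      have h1 : (i : ℕ) < pc f := i.isLt
      omega
    rw [show (pth hT (av f) (bv f)).getVert (i : ℕ) = gfun f i from
      (congrArg (fun w : (tr f).Walk (av f) (bv f) => w.getVert (i : ℕ)) hspine).symm.trans
        (spine_getVert f hle), gfun, dif_pos (by omega : (i : ℕ) < pc f), Fin.eta]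
    rw [wd]
    congr 1
    show ((((per f).orderIsoOfFin rfl) i : {y // y ∈ per f}) : Fin n) = x
    rw [hidef, OrderIso.apply_symm_apply]
  · have hxS : x ∉ (pth hT (av f) (bv f)).support.toFinset := by rw [hsupp]; exact hx
    rw [psi]
    simp only [dif_pos hT, dif_neg hxS]
    have hW : toA f x = pth hT x (av f) := pth_unique hT (toA_isPath f x)
    rw [← hW]
    exact toA_getVert_one f x hx

lemma phi_psi (H : SimpleGraph (Fin n)) (x0 y0 : Fin n) (hH : H.IsTree) :
    tr (psi H x0 y0) = H ∧ av (psi H x0 y0) = x0 ∧ bv (psi H x0 y0) = y0 := by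
  have hacy : H.IsAcyclic := (SimpleGraph.isTree_iff H).mp hH |>.2
  set f := psi H x0 y0 with hfdef
  have hcard : (pth hH x0 y0).support.toFinset.card = (pth hH x0 y0).length + 1 := by
    rw [List.toFinset_card_of_nodup ((Walk.isPath_def _).mp (pth_isPath hH x0 y0))]
    exact Walk.length_support _
  -- the value of f on the support
  have hfS : ∀ (x) (hx : x ∈ (pth hH x0 y0).support.toFinset),
      f x = (pth hH x0 y0).getVert
        (((((pth hH x0 y0).support.toFinset.orderIsoOfFin rfl).symm ⟨x, hx⟩ :
          Fin (pth hH x0 y0).support.toFinset.card)) : ℕ) := by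
    intro x hx
    rw [hfdef, psi]
    simp only [dif_pos hH, dif_pos hx]
  have hfout : ∀ (x), x ∉ (pth hH x0 y0).support.toFinset →
      f x = (pth hH x x0).getVert 1 := by
    intro x hx
    rw [hfdef, psi]
    simp only [dif_pos hH, dif_neg hx]
  -- invariance and injectivity on the support
  have hmapsS : ∀ x ∈ (pth hH x0 y0).support.toFinset,
      f x ∈ (pth hH x0 y0).support.toFinset := by
    intro x hx
    rw [hfS x hx]
    rw [List.mem_toFinset, Walk.mem_support_iff_exists_getVert]
    refine ⟨_, rfl, ?_⟩
    have := (((pth hH x0 y0).support.toFinset.orderIsoOfFin rfl).symm ⟨x, hx⟩).isLt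
    omega
  have hinjS : ∀ x ∈ (pth hH x0 y0).support.toFinset,
      ∀ y ∈ (pth hH x0 y0).support.toFinset, f x = f y → x = y := by
    intro x hx y hy hxy
    rw [hfS x hx, hfS y hy] at hxy
    have h1 := IsPath.getVert_inj (pth_isPath hH x0 y0)
      (by have := (((pth hH x0 y0).support.toFinset.orderIsoOfFin rfl).symm ⟨x, hx⟩).isLt
          omega)
      (by have := (((pth hH x0 y0).support.toFinset.orderIsoOfFin rfl).symm ⟨y, hy⟩).isLt
          omega) hxy
    have h2 : (((pth hH x0 y0).support.toFinset.orderIsoOfFin rfl).symm ⟨x, hx⟩)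
        = (((pth hH x0 y0).support.toFinset.orderIsoOfFin rfl).symm ⟨y, hy⟩) := Fin.ext h1
    have h3 := congrArg ((pth hH x0 y0).support.toFinset.orderIsoOfFin rfl) h2
    rw [OrderIso.apply_symm_apply, OrderIso.apply_symm_apply] at h3
    exact congrArg Subtype.val h3
  have hSper : (pth hH x0 y0).support.toFinset ⊆ per f :=
    subset_per_of_invariant hmapsS hinjS
  have hx0S : x0 ∈ (pth hH x0 y0).support.toFinset :=
    List.mem_toFinset.mpr (Walk.start_mem_support _)
  -- outside the support there are no periodic points
  have hmain : ∀ d, ∀ x, x ∉ (pth hH x0 y0).support.toFinset → H.dist x x0 = d →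
      ¬ IsPer f x := by
    intro d
    induction d using Nat.strong_induction_on with
    | _ d ih =>
      intro x hx hd hper
      have hxx0 : x ≠ x0 := fun h => hx (h ▸ hx0S)
      have hQnil : ¬ (pth hH x x0).Nil := Walk.not_nil_of_ne hxx0
      have hQlen : (pth hH x x0).length = H.dist x x0 :=
        path_length_eq_dist hacy _ (pth_isPath hH x x0)
      have hfx : f x = (pth hH x x0).getVert 1 := hfout x hx
      by_cases hfxS : f x ∈ (pth hH x0 y0).support.toFinset
      · -- iterates ≥ 1 stay in S, but x returns to itself
        have hiter : ∀ k, 1 ≤ k → f^[k] x ∈ (pth hH x0 y0).support.toFinset := by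
          intro k hk
          induction k with
          | zero => omega
          | succ k ihk =>
              rcases Nat.eq_zero_or_pos k with rfl | hkpos
              · simpa using hfxS
              · rw [Function.iterate_succ_apply']
                exact hmapsS _ (ihk hkpos)
        obtain ⟨k, hk, hfk⟩ := hper
        exact hx (hfk ▸ hiter k hk)
      · -- distance decreases
        have htail : H.dist (f x) x0 + 1 = d := by
          have h1 : (pth hH x x0).tail.length + 1 = (pth hH x x0).length :=
            Walk.length_tail_add_one hQnil
          have h2 : (pth hH x x0).tail.IsPath := (pth_isPath hH x x0).tail
          have h3 : (pth hH x x0).tail.length = H.dist ((pth hH x x0).getVert 1) x0 :=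
            path_length_eq_dist hacy _ h2
          rw [hfx, ← h3]
          omega
        exact ih (H.dist (f x) x0) (by omega) (f x) hfxS rfl hper.apply
  have hperS : per f = (pth hH x0 y0).support.toFinset := by
    apply Finset.Subset.antisymm ?_ hSper
    intro x hx
    by_contra hxS
    exact hmain (H.dist x x0) x hxS rfl (mem_per.mp hx)
  have hpc : pc f = (pth hH x0 y0).length + 1 := by
    rw [pc, hperS, hcard]
  -- the word of f is the path
  have hwd : ∀ i : Fin (pc f), wd f i = (pth hH x0 y0).getVert (i : ℕ) := by
    intro i
    have hsrtmem : srt f i ∈ per f := srt_mem f i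
    have hsrtS : srt f i ∈ (pth hH x0 y0).support.toFinset := hperS ▸ hsrtmem
    rw [wd, hfS _ hsrtS]
    congr 1
    rw [rank_congr hperS.symm _ hsrtS hsrtmem]
    have : (⟨srt f i, hsrtmem⟩ : {y // y ∈ per f}) = ((per f).orderIsoOfFin rfl) i :=
      Subtype.ext rfl
    rw [this]
    exact congrArg Fin.val (((per f).orderIsoOfFin rfl).symm_apply_apply i)
  have hav : av f = x0 := by
    rw [av_eq, hwd, Walk.getVert_zero]
  have hbv : bv f = y0 := by
    rw [bv_eq, hwd]
    show (pth hH x0 y0).getVert (pc f - 1) = y0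
    rw [hpc]
    simp only [Nat.add_sub_cancel]
    exact Walk.getVert_length _
  refine ⟨?_, hav, hbv⟩
  -- graph equality via edge sets
  have hsub : (tr f).edgeSet ⊆ H.edgeSet := by
    intro e he
    rw [tr, SimpleGraph.edgeSet_fromEdgeSet] at he
    obtain ⟨hmem, -⟩ := he
    rcases hmem with ⟨i, j, hij, rfl⟩ | ⟨x, hx, rfl⟩
    · rw [SimpleGraph.mem_edgeSet, hwd i, hwd j]
      have hj : (j : ℕ) < pc f := j.isLt
      have hilen : (i : ℕ) < (pth hH x0 y0).length := by omega
      have := (pth hH x0 y0).adj_getVert_succ hilen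
      rwa [show (i : ℕ) + 1 = (j : ℕ) from hij] at this
    · have hxS : x ∉ (pth hH x0 y0).support.toFinset := fun h => hx (hSper h)
      have hxx0 : x ≠ x0 := fun h => hxS (h ▸ hx0S)
      rw [SimpleGraph.mem_edgeSet, hfout x hxS]
      have hlen : 0 < (pth hH x x0).length := by
        rcases Nat.eq_zero_or_pos (pth hH x x0).length with h | h
        · exact absurd (Walk.eq_of_length_eq_zero h) hxx0
        · exact h
      have hadj := (pth hH x x0).adj_getVert_succ hlen
      rwa [Walk.getVert_zero] at hadj
  have hc1 := (tr_isTree f).card_edgeFinset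
  have hc2 := hH.card_edgeFinset
  have hsubF : (tr f).edgeFinset ⊆ H.edgeFinset := by
    intro e he
    rw [SimpleGraph.mem_edgeFinset] at he ⊢
    exact hsub he
  have hEq : (tr f).edgeFinset = H.edgeFinset :=
    Finset.eq_of_subset_of_card_le hsubF (by omega)
  apply SimpleGraph.edgeSet_inj.mp
  rw [← SimpleGraph.coe_edgeFinset, ← SimpleGraph.coe_edgeFinset, hEq]

/-- The Joyal bijection identity (graph side). -/
lemma joyal_sum :
    (∑ t ∈ (univ : Finset (SimpleGraph (Fin n) × Fin n × Fin n)).filter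
        (fun t => t.1.IsTree), t.1.dist t.2.1 t.2.2)
      = ∑ f : Fin n → Fin n, ((per f).card - 1) := by
  symm
  refine Finset.sum_nbij' (i := fun f => (tr f, av f, bv f))
    (j := fun t => psi t.1 t.2.1 t.2.2) ?_ ?_ ?_ ?_ ?_
  · intro f _
    rw [mem_filter]
    exact ⟨mem_univ _, tr_isTree f⟩
  · intro t _
    exact mem_univ _
  · intro f _
    exact psi_tr f
  · rintro ⟨H, x0, y0⟩ ht
    have hT : H.IsTree := (mem_filter.mp ht).2
    obtain ⟨h1, h2, h3⟩ := phi_psi H x0 y0 hT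
    simp only
    rw [h1, h2, h3]
  · intro f _
    rw [tr_dist f]
    rfl

omit [NeZero n] in
lemma m_eq : m n 1
    = ∑ t ∈ (univ : Finset (SimpleGraph (Fin n) × Fin n × Fin n)).filter
        (fun t => t.1.IsTree), t.1.dist t.2.1 t.2.2 := by
  rw [Finset.sum_filter, m, Fintype.sum_prod_type]
  apply Finset.sum_congr rfl
  intro G _
  rw [Fintype.sum_prod_type]
  apply Finset.sum_congr rfl
  intro a _
  apply Finset.sum_congr rfl
  intro b _
  by_cases h : G.IsTree <;> simp [h]

end TotalHeight

/-- The total height of Cayley trees: the sum over all labeled trees on `n` vertices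
with two marked ordered vertices of the distance between the marked vertices
equals `A_n` (`= n!·Σ_{k=0}^{n-2} n^k/k!`). -/
theorem total_height (n : ℕ) : m n 1 = A n := by
  cases n with
  | zero =>
      simp [m, A]
  | succ k =>
      haveI : NeZero (k+1) := ⟨k.succ_ne_zero⟩
      set n := k + 1 with hn
      have hm : m n 1 = ∑ f : Fin n → Fin n, ((TotalHeight.per f).card - 1) := by
        rw [TotalHeight.m_eq, TotalHeight.joyal_sum]
      have hone : ∀ f : Fin n → Fin n, 1 ≤ (TotalHeight.per f).card := by
        intro f
        exact Finset.card_pos.mpr (TotalHeight.per_nonempty f)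
      have hcardfun : ∑ _f : Fin n → Fin n, 1 = n ^ n := by
        rw [Finset.sum_const, smul_eq_mul, mul_one, Finset.card_univ, Fintype.card_fun,
          Fintype.card_fin]
      have h1 : m n 1 + n ^ n = ∑ f : Fin n → Fin n, (TotalHeight.per f).card := by
      
        rw [hm, ← hcardfun, ← Finset.sum_add_distrib]
        apply Finset.sum_congr rfl
        intro f _
        have := hone f
        omega
      have h2 := TotalHeight.exchange (n := n)
      have h3 := TotalHeight.sum_cInv_eq_A (n := n)
      have h4 : ∑ f : Fin n → Fin n, ((TotalHeight.per f).card + 1)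
          = (∑ f : Fin n → Fin n, (TotalHeight.per f).card) + n ^ n := by
        rw [Finset.sum_add_distrib, hcardfun]
      omega
end

section
/- Asymptotics of A_n: A_n / n! ~ (1/2)·e^n as n → ∞, where A_n = n!·Σ_{k=0}^{n-2} n^k/k!. Equivalently, e^{-n}·Σ_{k=0}^{n-2} n^k/k! → 1/2. -/
open Filter Set MeasureTheory Real

/-- If `f 0 = 0` and `f` has nonneg derivative on `[0,∞)`, then `f ≥ 0` there. -/
lemma nonneg_of_deriv {f f' : ℝ → ℝ} (h0 : f 0 = 0)
    (hd : ∀ x, 0 ≤ x → HasDerivAt f (f' x) x)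
    (hp : ∀ x, 0 ≤ x → 0 ≤ f' x) : ∀ x, 0 ≤ x → 0 ≤ f x := by
  intro x hx
  have hmono : MonotoneOn f (Ici (0:ℝ)) := by
    apply monotoneOn_of_deriv_nonneg (convex_Ici 0)
    · exact fun y hy => (hd y hy).continuousAt.continuousWithinAt
    · intro y hy
      rw [interior_Ici] at hy
      exact ((hd y hy.le).differentiableAt).differentiableWithinAt
    · intro y hy
      rw [interior_Ici] at hy
      rw [(hd y hy.le).deriv]
      exact hp y hy.le
  have := hmono (self_mem_Ici) hx hx
  rwa [h0] at this

lemma log_deriv_aux (x : ℝ) (hx : 0 ≤ x) :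
    HasDerivAt (fun y => Real.log (1 + y)) (1/(1+x)) x := by
  have h : (1:ℝ) + x ≠ 0 := by positivity
  have := (Real.hasDerivAt_log h).comp x ((hasDerivAt_id x).const_add 1)
  simpa [one_div, Function.comp_def] using this

/-- `2(1+x) log(1+x) ≤ x² + 2x` for `x ≥ 0`. -/
lemma log_quad_upper : ∀ x : ℝ, 0 ≤ x → 2*(1+x)*Real.log (1+x) ≤ x^2 + 2*x := by
  intro x hx
  have := nonneg_of_deriv (f := fun y => y^2 + 2*y - 2*(1+y)*Real.log (1+y))
    (f' := fun y => 2*y - 2*Real.log (1+y)) (by simp) ?_ ?_ x hx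
  · linarith
  · intro y hy
    have h1 : (0:ℝ) < 1 + y := by linarith
    have hl := log_deriv_aux y hy
    have : HasDerivAt (fun y : ℝ => 2*(1+y)*Real.log (1+y))
        (2 * Real.log (1+y) + 2*(1+y) * (1/(1+y))) y := by
      have := (((hasDerivAt_id y).const_add 1).const_mul 2).fun_mul hl
      simp only [id] at this
      refine this.congr_deriv ?_
      field_simp
    have h2 : HasDerivAt (fun y : ℝ => y^2 + 2*y) (2*y + 2) y := by
      simpa using ((hasDerivAt_pow 2 y).fun_add ((hasDerivAt_id y).const_mul 2))
    have := h2.fun_sub this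
    refine this.congr_deriv ?_
    field_simp
    ring
  · intro y hy
    have h1 : (0:ℝ) < 1 + y := by linarith
    have := Real.log_le_sub_one_of_pos h1
    linarith

/-- `x - x²/2 ≤ log(1+x)` for `x ≥ 0`. -/
lemma log_quad_lower : ∀ x : ℝ, 0 ≤ x → x - x^2/2 ≤ Real.log (1+x) := by
  intro x hx
  have := nonneg_of_deriv (f := fun y => Real.log (1+y) - (y - y^2/2))
    (f' := fun y => 1/(1+y) - (1 - y)) (by simp) ?_ ?_ x hx
  · linarith
  · intro y hy
    have h2 : HasDerivAt (fun y : ℝ => y - y^2/2) (1 - y) y := by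
      have := (hasDerivAt_id y).fun_sub ((hasDerivAt_pow 2 y).div_const 2)
      simpa using this
    exact (log_deriv_aux y hy).sub h2
  · intro y hy
    have h1 : (0:ℝ) < 1 + y := by linarith
    have : 1/(1+y) - (1-y) = y^2/(1+y) := by field_simp; ring
    show (0:ℝ) ≤ 1/(1+y) - (1-y)
    rw [this]
    positivity

/-- `log(1+x) ≤ x - x²/2 + x³/3` for `x ≥ 0`. -/
lemma log_cubic_upper : ∀ x : ℝ, 0 ≤ x → Real.log (1+x) ≤ x - x^2/2 + x^3/3 := by
  intro x hx
  have := nonneg_of_deriv (f := fun y => (y - y^2/2 + y^3/3) - Real.log (1+y))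
    (f' := fun y => (1 - y + y^2) - 1/(1+y)) (by simp) ?_ ?_ x hx
  · linarith
  · intro y hy
    have h2 : HasDerivAt (fun y : ℝ => y - y^2/2 + y^3/3) (1 - y + y^2) y := by
      have := ((hasDerivAt_id y).sub ((hasDerivAt_pow 2 y).div_const 2)).add
        ((hasDerivAt_pow 3 y).div_const 3)
      refine this.congr_deriv ?_
      push_cast
      ring
    exact h2.sub (log_deriv_aux y hy)
  · intro y hy
    have h1 : (0:ℝ) < 1 + y := by linarith
    have : (1 - y + y^2) - 1/(1+y) = y^3/(1+y) := by field_simp; ring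
    show (0:ℝ) ≤ (1 - y + y^2) - 1/(1+y)
    rw [this]
    positivity

noncomputable section

/-- `P m t = Σ_{k=0}^m (m!/k!) t^k`. -/
def Pp (m : ℕ) (t : ℝ) : ℝ := ∑ k ∈ Finset.range (m+1), ((m.factorial : ℝ)/(k.factorial : ℝ)) * t^k

/-- antiderivative of `t^m e^{-t}`. -/
def Ff (m : ℕ) (t : ℝ) : ℝ := -(Real.exp (-t) * Pp m t)

lemma Pp_hasDerivAt (m : ℕ) (t : ℝ) : HasDerivAt (Pp m) (Pp m t - t^m) t := by
  have h : HasDerivAt (Pp m)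
      (∑ k ∈ Finset.range (m+1), ((m.factorial : ℝ)/(k.factorial : ℝ)) * ((k:ℝ) * t^(k-1))) t := by
    apply HasDerivAt.fun_sum
    intro k _
    exact (hasDerivAt_pow k t).const_mul _
  convert h using 1
  rw [Finset.sum_range_succ' _ m]
  simp only [Nat.cast_zero, pow_zero, Nat.factorial_zero]
  have : ∀ k ∈ Finset.range m,
      ((m.factorial : ℝ)/((k+1).factorial : ℝ)) * ((((k+1:ℕ)):ℝ) * t^(k+1-1))
      = ((m.factorial : ℝ)/(k.factorial : ℝ)) * t^k := by
    intro k _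
    have h2 : ((k+1).factorial : ℝ) = ((k:ℝ)+1) * (k.factorial : ℝ) := by
      rw [Nat.factorial_succ]; push_cast; ring
    rw [h2]
    push_cast
    have hk : ((k:ℝ)+1) ≠ 0 := by positivity
    have hkf : (k.factorial : ℝ) ≠ 0 := by positivity
    field_simp
  rw [Finset.sum_congr rfl this]
  unfold Pp
  rw [Finset.sum_range_succ]
  have : ((m.factorial : ℝ)/(m.factorial : ℝ)) = 1 := by
    field_simp
  simp [this]

lemma Ff_hasDerivAt (m : ℕ) (t : ℝ) : HasDerivAt (Ff m) (t^m * Real.exp (-t)) t := by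
  have he : HasDerivAt (fun t : ℝ => Real.exp (-t)) (-Real.exp (-t)) t := by
    simpa [Function.comp_def] using (Real.hasDerivAt_exp (-t)).comp t (hasDerivAt_neg t)
  have := (he.fun_mul (Pp_hasDerivAt m t)).fun_neg
  refine this.congr_deriv ?_
  ring

lemma Ff_tendsto (m : ℕ) : Tendsto (Ff m) atTop (nhds 0) := by
  have : ∀ t : ℝ, Ff m t
      = -∑ k ∈ Finset.range (m+1), ((m.factorial : ℝ)/(k.factorial : ℝ)) * (t^k * Real.exp (-t)) := by
    intro t
    unfold Ff Pp
    rw [Finset.mul_sum]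
    congr 1
    apply Finset.sum_congr rfl
    intro k _
    ring
  rw [funext this]
  have h : Tendsto (fun t : ℝ => ∑ k ∈ Finset.range (m+1),
      ((m.factorial : ℝ)/(k.factorial : ℝ)) * (t^k * Real.exp (-t))) atTop (nhds 0) := by
    have := tendsto_finset_sum (Finset.range (m+1))
      (fun k _ => ((tendsto_pow_mul_exp_neg_atTop_nhds_zero k).const_mul
        ((m.factorial : ℝ)/(k.factorial : ℝ))))
    simpa using this
  simpa using h.neg

end

noncomputable section

open Real

/-- the rescaled integrand -/
def ffn (m : ℕ) (s : ℝ) : ℝ := (1 + s / Real.sqrt m)^m * Real.exp (-(s * Real.sqrt m))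

lemma ffn_cont (m : ℕ) : Continuous (ffn m) := by
  unfold ffn
  fun_prop

lemma ffn_nonneg (m : ℕ) {s : ℝ} (hs : 0 ≤ s) : 0 ≤ ffn m s := by
  unfold ffn
  have : (0:ℝ) ≤ 1 + s / Real.sqrt m := by
    have := div_nonneg hs (Real.sqrt_nonneg (m:ℝ))
    linarith
  positivity

lemma ffn_eq_exp (m : ℕ) (hm : 1 ≤ m) {s : ℝ} (hs : 0 ≤ s) :
    ffn m s = Real.exp ((m:ℝ) * Real.log (1 + s / Real.sqrt m) - s * Real.sqrt m) := by
  have hr : (0:ℝ) < Real.sqrt m := Real.sqrt_pos.mpr (by exact_mod_cast Nat.pos_of_ne_zero (by omega))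
  have h1 : (0:ℝ) < 1 + s / Real.sqrt m := by positivity
  unfold ffn
  have h2 : (1 + s / Real.sqrt m)^m = Real.exp ((m:ℝ) * Real.log (1 + s / Real.sqrt m)) := by
    rw [Real.exp_nat_mul, Real.exp_log h1]
  rw [h2, ← Real.exp_add]
  ring_nf

/-- key exponent bound: `ffn m s ≤ exp ((1-s)/4)` for `m ≥ 1`, `s > 0`. -/
lemma ffn_le_bound (m : ℕ) (hm : 1 ≤ m) {s : ℝ} (hs : 0 < s) :
    ffn m s ≤ Real.exp ((1 - s)/4) := by
  rw [ffn_eq_exp m hm hs.le]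
  apply Real.exp_le_exp.mpr
  set r := Real.sqrt m with hr_def
  have hr1 : (1:ℝ) ≤ r := by
    rw [hr_def]
    rw [Real.one_le_sqrt]
    exact_mod_cast hm
  have hr0 : (0:ℝ) < r := lt_of_lt_of_le one_pos hr1
  have hm2 : (m:ℝ) = r^2 := (Real.sq_sqrt (by positivity : (0:ℝ) ≤ (m:ℝ))).symm
  set L := Real.log (1 + s/r) with hL
  have key := log_quad_upper (s/r) (by positivity)
  -- key : 2*(1+s/r)*L ≤ (s/r)^2 + 2*(s/r)
  have key' : 2*(r+s)*r*L ≤ s^2 + 2*s*r := by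
    have h := mul_le_mul_of_nonneg_left key (by positivity : (0:ℝ) ≤ r^2)
    have e1 : r^2 * (2*(1+s/r)*L) = 2*(r+s)*r*L := by field_simp
    have e2 : r^2 * ((s/r)^2 + 2*(s/r)) = s^2 + 2*s*r := by field_simp
    rw [e1, e2] at h
    exact h
  rw [hm2]
  nlinarith [key', sq_nonneg (s-1), mul_nonneg (sub_nonneg.mpr hr1) (sq_nonneg (s-1)),
    mul_pos hs hr0, sq_nonneg s, mul_nonneg (sub_nonneg.mpr hr1) (sq_nonneg s),
    mul_pos (mul_pos hs hs) hr0]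

lemma ffn_le_one (m : ℕ) (hm : 1 ≤ m) {s : ℝ} (hs : 0 ≤ s) : ffn m s ≤ 1 := by
  rw [ffn_eq_exp m hm hs]
  apply Real.exp_le_one_iff.mpr
  set r := Real.sqrt m with hr_def
  have hr1 : (1:ℝ) ≤ r := by
    rw [hr_def, Real.one_le_sqrt]; exact_mod_cast hm
  have hr0 : (0:ℝ) < r := lt_of_lt_of_le one_pos hr1
  have hm2 : (m:ℝ) = r^2 := (Real.sq_sqrt (by positivity : (0:ℝ) ≤ (m:ℝ))).symm
  have hlog : Real.log (1 + s/r) ≤ s/r := by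
    have := Real.log_le_sub_one_of_pos (by positivity : (0:ℝ) < 1 + s/r)
    linarith
  have : (m:ℝ) * Real.log (1 + s/r) ≤ (m:ℝ) * (s/r) := by
    apply mul_le_mul_of_nonneg_left hlog (by positivity)
  have e : (m:ℝ) * (s/r) = s * r := by rw [hm2]; field_simp
  nlinarith [this]

lemma sqrt_nat_tendsto : Tendsto (fun m : ℕ => Real.sqrt m) atTop atTop := by
  apply Filter.tendsto_atTop_atTop.mpr
  intro b
  refine ⟨⌈(max b 0)^2⌉₊, fun n hn => ?_⟩
  have h1 : ((max b 0)^2 : ℝ) ≤ (n:ℝ) := by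
    calc ((max b 0)^2 : ℝ) ≤ (⌈(max b 0)^2⌉₊ : ℝ) := Nat.le_ceil _
    _ ≤ (n:ℝ) := by exact_mod_cast hn
  calc b ≤ max b 0 := le_max_left _ _
  _ = Real.sqrt ((max b 0)^2) := (Real.sqrt_sq (le_max_right _ _)).symm
  _ ≤ Real.sqrt n := Real.sqrt_le_sqrt h1

/-- pointwise limit : `ffn m s → exp (-(s²/2))`. -/
lemma ffn_tendsto_gauss {s : ℝ} (hs : 0 < s) :
    Tendsto (fun m : ℕ => ffn m s) atTop (nhds (Real.exp (-(s^2/2)))) := by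
  have hexp : Tendsto (fun m : ℕ => (m:ℝ) * Real.log (1 + s / Real.sqrt m) - s * Real.sqrt m)
      atTop (nhds (-(s^2/2))) := by
    apply tendsto_of_tendsto_of_tendsto_of_le_of_le' (g := fun _ : ℕ => -(s^2/2))
      (h := fun m : ℕ => -(s^2/2) + s^3/(3 * Real.sqrt m))
    · exact tendsto_const_nhds
    · have h1 : Tendsto (fun m : ℕ => s^3/(3 * Real.sqrt m)) atTop (nhds 0) := by
        have h2 : Tendsto (fun m : ℕ => 3 * Real.sqrt m) atTop atTop :=
          sqrt_nat_tendsto.const_mul_atTop (by norm_num)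
        have h3 := h2.inv_tendsto_atTop.const_mul (s^3)
        rw [mul_zero] at h3
        exact h3.congr (fun m => by show s^3 * (3 * Real.sqrt m)⁻¹ = _; ring)
      simpa using (tendsto_const_nhds (x := -(s^2/2)) (f := atTop)).add h1
    · filter_upwards [eventually_ge_atTop 1] with m hm
      set r := Real.sqrt m with hr_def
      have hr1 : (1:ℝ) ≤ r := by rw [hr_def, Real.one_le_sqrt]; exact_mod_cast hm
      have hr0 : (0:ℝ) < r := lt_of_lt_of_le one_pos hr1
      have hm2 : (m:ℝ) = r^2 := (Real.sq_sqrt (by positivity : (0:ℝ) ≤ (m:ℝ))).symm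
      have key := log_quad_lower (s/r) (by positivity)
      have : (m:ℝ) * (s/r - (s/r)^2/2) ≤ (m:ℝ) * Real.log (1 + s/r) :=
        mul_le_mul_of_nonneg_left key (by positivity)
      have e : (m:ℝ) * (s/r - (s/r)^2/2) = s*r - s^2/2 := by rw [hm2]; field_simp
      rw [e] at this
      linarith
    · filter_upwards [eventually_ge_atTop 1] with m hm
      set r := Real.sqrt m with hr_def
      have hr1 : (1:ℝ) ≤ r := by rw [hr_def, Real.one_le_sqrt]; exact_mod_cast hm
      have hr0 : (0:ℝ) < r := lt_of_lt_of_le one_pos hr1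
      have hm2 : (m:ℝ) = r^2 := (Real.sq_sqrt (by positivity : (0:ℝ) ≤ (m:ℝ))).symm
      have key := log_cubic_upper (s/r) (by positivity)
      have : (m:ℝ) * Real.log (1 + s/r) ≤ (m:ℝ) * (s/r - (s/r)^2/2 + (s/r)^3/3) :=
        mul_le_mul_of_nonneg_left key (by positivity)
      have e : (m:ℝ) * (s/r - (s/r)^2/2 + (s/r)^3/3) = s*r - s^2/2 + s^3/(3*r) := by
        rw [hm2]; field_simp
      rw [e] at this
      linarith
  have := (Real.continuous_exp.tendsto _).comp hexp
  apply this.congr'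
  filter_upwards [eventually_ge_atTop 1] with m hm
  exact (ffn_eq_exp m hm hs.le).symm

lemma bound_integrable (a : ℝ) :
    IntegrableOn (fun s : ℝ => Real.exp ((1 - s)/4)) (Ioi a) := by
  have h : IntegrableOn (fun s : ℝ => Real.exp (1/4) * Real.exp (-4⁻¹ * s)) (Ioi a) :=
    (exp_neg_integrableOn_Ioi a (by norm_num : (0:ℝ) < 4⁻¹)).const_mul _
  apply h.congr_fun ?_ measurableSet_Ioi
  intro s _
  simp only [← Real.exp_add]
  congr 1
  ring

lemma ffn_integrableOn (m : ℕ) (hm : 1 ≤ m) {a : ℝ} (ha : 0 ≤ a) :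
    IntegrableOn (ffn m) (Ioi a) := by
  apply Integrable.mono' (bound_integrable a)
    ((ffn_cont m).aestronglyMeasurable.restrict)
  filter_upwards [ae_restrict_mem measurableSet_Ioi] with s hs
  have hs0 : 0 < s := lt_of_le_of_lt ha hs
  rw [Real.norm_of_nonneg (ffn_nonneg m hs0.le)]
  exact ffn_le_bound m hm hs0

end

noncomputable section
open Real

/-- antiderivative of `ffn m` -/
def Gg (m : ℕ) (s : ℝ) : ℝ :=
  (Real.exp m / ((m:ℝ)^m * Real.sqrt m)) * Ff m ((m:ℝ) + s * Real.sqrt m)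

lemma Gg_hasDerivAt (m : ℕ) (hm : 1 ≤ m) (s : ℝ) : HasDerivAt (Gg m) (ffn m s) s := by
  have hm0 : (0:ℝ) < (m:ℝ) := by exact_mod_cast Nat.pos_of_ne_zero (by omega)
  have hr : (0:ℝ) < Real.sqrt m := Real.sqrt_pos.mpr hm0
  have hm2 : (m:ℝ) = Real.sqrt m ^ 2 := (Real.sq_sqrt hm0.le).symm
  have hu : HasDerivAt (fun s : ℝ => (m:ℝ) + s * Real.sqrt m) (Real.sqrt m) s := by
    simpa using ((hasDerivAt_id s).mul_const (Real.sqrt m)).const_add (m:ℝ)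
  have h := ((Ff_hasDerivAt m ((m:ℝ) + s * Real.sqrt m)).comp s hu).const_mul
    (Real.exp m / ((m:ℝ)^m * Real.sqrt m))
  refine h.congr_deriv ?_
  symm
  show ffn m s = Real.exp m / ((m:ℝ)^m * Real.sqrt m) *
    (((m:ℝ) + s * Real.sqrt m)^m * Real.exp (-((m:ℝ) + s * Real.sqrt m)) * Real.sqrt m)
  unfold ffn
  set r := Real.sqrt m with hrdef
  have he : ((m:ℝ) + s * r) = (m:ℝ) * (1 + s/r) := by
    rw [hm2]; field_simp
  rw [he, mul_pow]
  have : Real.exp (-((m:ℝ) * (1 + s/r))) = Real.exp (-(m:ℝ)) * Real.exp (-(s*r)) := by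
    rw [← Real.exp_add]
    congr 1
    rw [hm2]; field_simp; ring
  rw [this]
  have hpm : ((m:ℝ)^m) ≠ 0 := by positivity
  have h1 : Real.exp (m:ℝ) * Real.exp (-(m:ℝ)) = 1 := by rw [← Real.exp_add]; simp
  rw [show Real.exp (-(s*r)) = Real.exp (-(r*s)) from by rw [mul_comm]] at this ⊢
  rw [div_mul_eq_mul_div, eq_div_iff (by positivity)]
  linear_combination (-((m:ℝ)^m * (1 + s/r)^m * Real.exp (-(r*s)) * r)) * h1

lemma Gg_tendsto (m : ℕ) (hm : 1 ≤ m) : Tendsto (Gg m) atTop (nhds 0) := by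
  have hm0 : (0:ℝ) < (m:ℝ) := by exact_mod_cast Nat.pos_of_ne_zero (by omega)
  have hr : (0:ℝ) < Real.sqrt m := Real.sqrt_pos.mpr hm0
  have hu : Tendsto (fun s : ℝ => (m:ℝ) + s * Real.sqrt m) atTop atTop := by
    apply tendsto_atTop_add_const_left
    exact Tendsto.atTop_mul_const hr tendsto_id
  have := ((Ff_tendsto m).comp hu).const_mul (Real.exp m / ((m:ℝ)^m * Real.sqrt m))
  rw [mul_zero] at this
  exact this

/-- evaluation of the improper integral -/
lemma key_eval (m : ℕ) (hm : 1 ≤ m) :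
    ∫ s in Ioi (2 / Real.sqrt m), ffn m s
      = (Real.exp m / ((m:ℝ)^m * Real.sqrt m)) * (Real.exp (-((m:ℝ)+2)) * Pp m ((m:ℝ)+2)) := by
  have hm0 : (0:ℝ) < (m:ℝ) := by exact_mod_cast Nat.pos_of_ne_zero (by omega)
  have hr : (0:ℝ) < Real.sqrt m := Real.sqrt_pos.mpr hm0
  have ha : (0:ℝ) ≤ 2 / Real.sqrt m := by positivity
  have h := integral_Ioi_of_hasDerivAt_of_tendsto'
    (f := Gg m) (f' := ffn m) (a := 2 / Real.sqrt m)
    (fun x _ => Gg_hasDerivAt m hm x) (ffn_integrableOn m hm ha) (Gg_tendsto m hm)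
  rw [h]
  have he : (m:ℝ) + (2 / Real.sqrt m) * Real.sqrt m = (m:ℝ) + 2 := by
    rw [div_mul_cancel₀]
    exact ne_of_gt hr
  rw [zero_sub]
  unfold Gg
  rw [he]
  unfold Ff
  ring

/-- the Gaussian limit of the full integral -/
lemma II_tendsto : Tendsto (fun m : ℕ => ∫ s in Ioi (0:ℝ), ffn m s) atTop
    (nhds (∫ s in Ioi (0:ℝ), Real.exp (-(s^2/2)))) := by
  apply tendsto_integral_filter_of_dominated_convergence
    (bound := fun s => Real.exp ((1 - s)/4))
  · filter_upwards with m
    exact (ffn_cont m).aestronglyMeasurable.restrict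
  · filter_upwards [eventually_ge_atTop 1] with m hm
    filter_upwards [ae_restrict_mem measurableSet_Ioi] with s hs
    rw [Real.norm_of_nonneg (ffn_nonneg m (le_of_lt hs))]
    exact ffn_le_bound m hm hs
  · exact bound_integrable 0
  · filter_upwards [ae_restrict_mem measurableSet_Ioi] with s hs
    exact ffn_tendsto_gauss hs

/-- the boundary-layer integral is small -/
lemma Ioc_tendsto : Tendsto (fun m : ℕ => ∫ s in Ioc (0:ℝ) (2 / Real.sqrt m), ffn m s)
    atTop (nhds 0) := by
  apply squeeze_zero_norm' (a := fun m : ℕ => 2 / Real.sqrt m)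
  · filter_upwards [eventually_ge_atTop 1] with m hm
    have hm0 : (0:ℝ) < (m:ℝ) := by exact_mod_cast Nat.pos_of_ne_zero (by omega)
    have hr : (0:ℝ) < Real.sqrt m := Real.sqrt_pos.mpr hm0
    have hfin : MeasureTheory.volume (Ioc (0:ℝ) (2 / Real.sqrt m)) < ⊤ := by
      rw [Real.volume_Ioc]
      exact ENNReal.ofReal_lt_top
    have hb := norm_setIntegral_le_of_norm_le_const hfin
      (C := 1) (f := ffn m) ?_
    · calc ‖∫ s in Ioc (0:ℝ) (2 / Real.sqrt m), ffn m s‖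
        ≤ 1 * (MeasureTheory.volume (Ioc (0:ℝ) (2 / Real.sqrt m))).toReal := hb
      _ = 2 / Real.sqrt m := by
          rw [Real.volume_Ioc, one_mul, sub_zero, ENNReal.toReal_ofReal (by positivity)]
    · intro s hs
      rw [Real.norm_of_nonneg (ffn_nonneg m (le_of_lt hs.1))]
      exact ffn_le_one m hm (le_of_lt hs.1)
  · have h2 : Tendsto (fun m : ℕ => Real.sqrt m) atTop atTop := sqrt_nat_tendsto
    have h3 := h2.inv_tendsto_atTop.const_mul (2:ℝ)
    rw [mul_zero] at h3
    exact h3.congr (fun m => by show (2:ℝ) * (Real.sqrt m)⁻¹ = _ ; rw [div_eq_mul_inv])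

/-- the tail integral converges to the Gaussian integral -/
lemma Jj_tendsto : Tendsto (fun m : ℕ => ∫ s in Ioi (2 / Real.sqrt m), ffn m s) atTop
    (nhds (∫ s in Ioi (0:ℝ), Real.exp (-(s^2/2)))) := by
  have h := II_tendsto.sub Ioc_tendsto
  rw [sub_zero] at h
  apply h.congr'
  filter_upwards [eventually_ge_atTop 1] with m hm
  have hm0 : (0:ℝ) < (m:ℝ) := by exact_mod_cast Nat.pos_of_ne_zero (by omega)
  have hr : (0:ℝ) < Real.sqrt m := Real.sqrt_pos.mpr hm0
  have hc : (0:ℝ) ≤ 2 / Real.sqrt m := by positivity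
  have hsplit : Ioc (0:ℝ) (2 / Real.sqrt m) ∪ Ioi (2 / Real.sqrt m) = Ioi (0:ℝ) :=
    Ioc_union_Ioi_eq_Ioi hc
  have hint1 : IntegrableOn (ffn m) (Ioc (0:ℝ) (2 / Real.sqrt m)) :=
    (ffn_integrableOn m hm le_rfl).mono_set Ioc_subset_Ioi_self
  have hint2 : IntegrableOn (ffn m) (Ioi (2 / Real.sqrt m)) :=
    ffn_integrableOn m hm hc
  have := MeasureTheory.setIntegral_union (Ioc_disjoint_Ioi le_rfl) measurableSet_Ioi
    hint1 hint2 (f := ffn m) (μ := MeasureTheory.volume)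
  rw [hsplit] at this
  rw [this]
  ring

/-- the Stirling factor -/
lemma aa_tendsto : Tendsto (fun m : ℕ => Real.sqrt m * ((m:ℝ)/Real.exp 1)^m / m.factorial)
    atTop (nhds ((Real.sqrt 2 * Real.sqrt π)⁻¹)) := by
  have h := Stirling.tendsto_stirlingSeq_sqrt_pi
  have hne : Real.sqrt 2 * Real.sqrt π ≠ 0 := by positivity
  have h2 : Tendsto (fun m : ℕ => (Real.sqrt 2 * Stirling.stirlingSeq m)⁻¹) atTop
      (nhds ((Real.sqrt 2 * Real.sqrt π)⁻¹)) := ((h.const_mul _).inv₀ hne)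
  apply h2.congr'
  filter_upwards [eventually_ge_atTop 1] with m hm
  have hm0 : (0:ℝ) < (m:ℝ) := by exact_mod_cast Nat.pos_of_ne_zero (by omega)
  have hr : (0:ℝ) < Real.sqrt m := Real.sqrt_pos.mpr hm0
  have hfac : (0:ℝ) < (m.factorial : ℝ) := by exact_mod_cast m.factorial_pos
  have hpow : (0:ℝ) < ((m:ℝ)/Real.exp 1)^m := by positivity
  rw [Stirling.stirlingSeq, Real.sqrt_mul (by norm_num : (0:ℝ) ≤ 2)]
  have e1 : Real.sqrt 2 * ((m.factorial:ℝ)/(Real.sqrt 2 * Real.sqrt m * ((m:ℝ)/Real.exp 1)^m))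
      = (m.factorial:ℝ)/(Real.sqrt m * ((m:ℝ)/Real.exp 1)^m) := by
    field_simp
  rw [e1, inv_div]

end

open Real in
lemma gauss_value : ∫ s in Ioi (0:ℝ), Real.exp (-(s^2/2)) = Real.sqrt 2 * Real.sqrt π / 2 := by
  have h : (fun s : ℝ => Real.exp (-(s^2/2))) = fun s : ℝ => Real.exp (-(1/2) * s^2) := by
    ext s; congr 1; ring
  rw [h, integral_gaussian_Ioi]
  rw [show π / (1/2:ℝ) = 2 * π by ring, Real.sqrt_mul (by norm_num)]

lemma main_eq (m : ℕ) (hm : 1 ≤ m) :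
    Real.exp (-((m:ℝ)+2)) * ∑ k ∈ Finset.range (m+1), ((m:ℝ)+2)^k / k.factorial
    = (Real.sqrt m * ((m:ℝ)/Real.exp 1)^m / m.factorial)
        * ∫ s in Ioi (2/Real.sqrt m), ffn m s := by
  rw [key_eval m hm]
  have hm0 : (0:ℝ) < (m:ℝ) := by exact_mod_cast Nat.pos_of_ne_zero (by omega)
  have hr : (0:ℝ) < Real.sqrt m := Real.sqrt_pos.mpr hm0
  have hfac : ((m.factorial:ℝ)) ≠ 0 := by positivity
  have hsum : ∑ k ∈ Finset.range (m+1), ((m:ℝ)+2)^k / k.factorial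
      = Pp m ((m:ℝ)+2) / m.factorial := by
    unfold Pp
    rw [Finset.sum_div]
    apply Finset.sum_congr rfl
    intro k _
    have hk : ((k.factorial:ℝ)) ≠ 0 := by positivity
    field_simp
  rw [hsum]
  have hpow : ((m:ℝ)/Real.exp 1)^m = (m:ℝ)^m / Real.exp m := by
    rw [div_pow, Real.exp_one_pow]
  rw [hpow]
  have hpm : ((m:ℝ)^m) ≠ 0 := by positivity
  field_simp [Real.exp_ne_zero]

/-- `A_n / n! ~ (1/2)·e^n`, i.e. `e^{-n} · Σ_{k=0}^{n-2} n^k/k! → 1/2` as `n → ∞`. -/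
theorem A_div_factorial_asymp :
    Tendsto
      (fun n : ℕ => Real.exp (-(n : ℝ)) * ∑ k ∈ Finset.range (n - 1), (n : ℝ) ^ k / k.factorial)
      atTop (nhds (1 / 2)) := by
  apply (Filter.tendsto_add_atTop_iff_nat 2).mp
  have hJ : Tendsto (fun m : ℕ => ∫ s in Ioi (2/Real.sqrt m), ffn m s) atTop
      (nhds (Real.sqrt 2 * Real.sqrt Real.pi / 2)) := by
    rw [← gauss_value]
    exact Jj_tendsto
  have hlim := aa_tendsto.mul hJ
  have hne : Real.sqrt 2 * Real.sqrt Real.pi ≠ 0 := by positivity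
  have hval : (Real.sqrt 2 * Real.sqrt Real.pi)⁻¹ * (Real.sqrt 2 * Real.sqrt Real.pi / 2)
      = 1/2 := by field_simp
  rw [hval] at hlim
  apply hlim.congr'
  filter_upwards [eventually_ge_atTop 1] with m hm
  have h := main_eq m hm
  show _ = Real.exp (-((m+2 : ℕ) : ℝ)) * ∑ k ∈ Finset.range ((m+2) - 1), ((m+2 : ℕ) : ℝ)^k / k.factorial
  have h1 : (m + 2) - 1 = m + 1 := by omega
  rw [h1]
  have h2 : ((m+2 : ℕ) : ℝ) = (m:ℝ) + 2 := by push_cast; ring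
  rw [h2]
  exact h.symm
end
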